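/- arXiv:1810.11629 — 9 statements merged into one kernel-verified Lean document; each statement's English description precedes it below -/
import Mathlib

section
/- Let λ₁ > 0, M > 0 and 0 < p ≤ 1, and suppose Z > 0 satisfies Z = p·λ₁·(1 − e^{−Z M}). Define G(x) = 1 − e^{−Z x} for x ≥ 0 and f_X(x) = λ₁ e^{−λ₁ x}. Then for every x ≥ 0, G(x) = ∫₀ˣ [ (1 − p)·f_X(x − u)·G(u) + p·f_X(u)·G(x + M − u) ] du. -/
/-!
Reflecting `u ↦ x - u` in the second term turns the right-hand side into the convolution
`∫₀ˣ f_X(x - u) H(u) du` with `H(u) = (1 - p) G(u) + p G(u + M)`. For `G(u) = 1 - e^{-Z u}` the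
fixed-point equation for `Z` is exactly the first-order ODE `λ₁ H = λ₁ G + G'`, and for the
exponential density `e^{-λ₁(x - u)} (λ₁ G(u) + G'(u))` is the `u`-derivative of
`e^{-λ₁(x - u)} G(u)`, so the integral telescopes to `G(x) - e^{-λ₁ x} G(0) = G(x)`.
-/

open Real MeasureTheory

theorem integral_mixture_eq_integral_mul_mixture {f G : ℝ → ℝ} (hf : Continuous f)
    (hG : Continuous G) (p M x : ℝ) :
    ∫ u in (0:ℝ)..x, ((1 - p) * f (x - u) * G u + p * f u * G (x + M - u)) =
      ∫ u in (0:ℝ)..x, f (x - u) * ((1 - p) * G u + p * G (u + M)) := by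
  have hA : Continuous fun u => (1 - p) * f (x - u) * G u := by fun_prop
  have hB : Continuous fun u => p * f u * G (x + M - u) := by fun_prop
  have hB' : Continuous fun u => p * f (x - u) * G (u + M) := by fun_prop
  have hreflect : ∫ u in (0:ℝ)..x, p * f u * G (x + M - u) =
      ∫ u in (0:ℝ)..x, p * f (x - u) * G (u + M) := by
    have h := intervalIntegral.integral_comp_sub_left (a := 0) (b := x)
      (fun u => p * f u * G (x + M - u)) x
    simp only [sub_self, sub_zero] at h
    rw [← h]
    congr 1 with u
    ring_nf
  rw [intervalIntegral.integral_add (hA.intervalIntegrable _ _) (hB.intervalIntegrable _ _),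
    hreflect, ← intervalIntegral.integral_add (hA.intervalIntegrable _ _)
      (hB'.intervalIntegrable _ _)]
  congr 1 with u
  ring

theorem integral_exp_mul_add_deriv {G G' : ℝ → ℝ} (hG : ∀ u, HasDerivAt G (G' u) u)
    (hG' : Continuous G') (lam x : ℝ) :
    ∫ u in (0:ℝ)..x, exp (-lam * (x - u)) * (lam * G u + G' u) =
      G x - exp (-lam * x) * G 0 := by
  have hGc : Continuous G := continuous_iff_continuousAt.2 fun u => (hG u).continuousAt
  have hweight (u : ℝ) :
      HasDerivAt (fun u => exp (-lam * (x - u))) (exp (-lam * (x - u)) * lam) u := by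
    simpa using (((hasDerivAt_id u).const_sub x).const_mul (-lam)).exp
  rw [intervalIntegral.integral_eq_sub_of_hasDerivAt (f := fun u => exp (-lam * (x - u)) * G u)
    (fun u _ => ((hweight u).mul (hG u)).congr_deriv (by ring))
    (by apply Continuous.intervalIntegrable; fun_prop)]
  simp

theorem stmt0_general (lam M p Z : ℝ)
    (hZeq : Z = p * lam * (1 - Real.exp (-Z * M))) :
    ∀ x : ℝ, 0 ≤ x →
      (1 - Real.exp (-Z * x)) =
        ∫ u in (0:ℝ)..x,
          ((1 - p) * (lam * Real.exp (-lam * (x - u))) * (1 - Real.exp (-Z * u))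
            + p * (lam * Real.exp (-lam * u)) * (1 - Real.exp (-Z * (x + M - u)))) := by
  intro x _
  have hG (u : ℝ) : HasDerivAt (fun t => 1 - exp (-Z * t)) (Z * exp (-Z * u)) u := by
    simpa [mul_comm] using (((hasDerivAt_id u).const_mul (-Z)).exp).const_sub 1
  have hODE (u : ℝ) : lam * ((1 - p) * (1 - exp (-Z * u)) + p * (1 - exp (-Z * (u + M)))) =
      lam * (1 - exp (-Z * u)) + Z * exp (-Z * u) := by
    rw [show -Z * (u + M) = -Z * u + -Z * M by ring, exp_add]
    linear_combination -exp (-Z * u) * hZeq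
  calc 1 - exp (-Z * x)
      = ∫ u in (0:ℝ)..x,
          exp (-lam * (x - u)) * (lam * (1 - exp (-Z * u)) + Z * exp (-Z * u)) := by
        rw [integral_exp_mul_add_deriv hG (by fun_prop)]
        simp
    _ = ∫ u in (0:ℝ)..x, lam * exp (-lam * (x - u)) *
          ((1 - p) * (1 - exp (-Z * u)) + p * (1 - exp (-Z * (u + M)))) := by
        congr 1 with u
        rw [← hODE]
        ring
    _ = _ := (integral_mixture_eq_integral_mul_mixture (f := fun t => lam * exp (-lam * t))
          (G := fun t => 1 - exp (-Z * t)) (by fun_prop) (by fun_prop) p M x).symm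

/-- Verification step of Theorem 1 (IBEP): the candidate stationary CDF
`G(x) = 1 - exp(-Z x)` satisfies the steady-state integral equation. -/
theorem stmt0 (lam M p Z : ℝ) (hlam : 0 < lam) (hM : 0 < M)
    (hp0 : 0 < p) (hp1 : p ≤ 1) (hZpos : 0 < Z)
    (hZeq : Z = p * lam * (1 - Real.exp (-Z * M))) :
    ∀ x : ℝ, 0 ≤ x →
      (1 - Real.exp (-Z * x)) =
        ∫ u in (0:ℝ)..x,
          ((1 - p) * (lam * Real.exp (-lam * (x - u))) * (1 - Real.exp (-Z * u))
            + p * (lam * Real.exp (-lam * u)) * (1 - Real.exp (-Z * (x + M - u)))) :=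
  stmt0_general lam M p Z hZeq
end

section
/- Let λ₁ > 0, M > 0 and 0 < p ≤ 1. The equation z = p·λ₁·(1 − e^{−z M}) has a solution z > 0 if and only if p·λ₁·M > 1; moreover, when p·λ₁·M > 1 the positive solution is unique. -/
open Real

/-- The fixed-point equation `z = p λ₁ (1 - exp(-z M))` has a positive solution
iff `p λ₁ M > 1`, and then the positive solution is unique. -/
theorem stmt1 (lam M p : ℝ) (hlam : 0 < lam) (hM : 0 < M)
    (hp0 : 0 < p) (hp1 : p ≤ 1) :
    ((∃ z : ℝ, 0 < z ∧ z = p * lam * (1 - Real.exp (-z * M))) ↔ 1 < p * lam * M)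
    ∧ (1 < p * lam * M →
        ∃! z : ℝ, 0 < z ∧ z = p * lam * (1 - Real.exp (-z * M))) := by
  have hc0 : 0 < p * lam := mul_pos hp0 hlam
  set c := p * lam with hc
  -- forward direction
  have fwd : (∃ z : ℝ, 0 < z ∧ z = c * (1 - Real.exp (-z * M))) → 1 < c * M := by
    rintro ⟨z, hz, hzeq⟩
    have h1 : (-z * M) + 1 < Real.exp (-z * M) :=
      Real.add_one_lt_exp (by nlinarith)
    have h3 : z < c * (z * M) := by
      calc z = c * (1 - Real.exp (-z * M)) := hzeq
        _ < c * (z * M) := by apply mul_lt_mul_of_pos_left _ hc0; linarith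
    have := (mul_lt_mul_iff_right₀ hz).mp (by nlinarith : z * 1 < z * (c * M))
    linarith
  -- existence
  have exi : 1 < c * M → ∃ z : ℝ, 0 < z ∧ z = c * (1 - Real.exp (-z * M)) := by
    intro h
    set z0 := (c * M - 1) / (2 * M) with hz0def
    have hz0 : 0 < z0 := div_pos (by linarith) (by linarith)
    have hz0M : z0 * M = (c * M - 1) / 2 := by
      rw [hz0def]; field_simp
    have hz0c : z0 < c := by
      rw [hz0def, div_lt_iff₀ (by linarith : (0:ℝ) < 2 * M)]
      nlinarith
    set f : ℝ → ℝ := fun z => c * (1 - Real.exp (-z * M)) - z with hf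
    have hcont : ContinuousOn f (Set.Icc z0 c) := by
      apply Continuous.continuousOn; fun_prop
    have hfc : f c < 0 := by
      have : 0 < Real.exp (-c * M) := Real.exp_pos _
      simp only [hf]
      nlinarith
    have hfz0 : 0 < f z0 := by
      have hx : 0 < z0 * M := mul_pos hz0 hM
      have hE0 : 0 < Real.exp (-z0 * M) := Real.exp_pos _
      have hEmul : Real.exp (-z0 * M) * Real.exp (z0 * M) = 1 := by
        rw [← Real.exp_add]; simp
      have hgt : z0 * M + 1 < Real.exp (z0 * M) :=
        Real.add_one_lt_exp (ne_of_gt hx)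
      have hE1 : Real.exp (-z0 * M) * (1 + z0 * M) < 1 := by
        calc Real.exp (-z0 * M) * (1 + z0 * M)
            < Real.exp (-z0 * M) * Real.exp (z0 * M) := by
              apply mul_lt_mul_of_pos_left _ hE0; linarith
          _ = 1 := hEmul
      simp only [hf]
      nlinarith [mul_pos hz0 hx, mul_pos hc0 hx, mul_pos hz0 (mul_pos hz0 hM)]
    have hsub := intermediate_value_Icc' (le_of_lt hz0c) hcont
    have h0mem : (0:ℝ) ∈ Set.Icc (f c) (f z0) := ⟨le_of_lt hfc, le_of_lt hfz0⟩
    obtain ⟨z, hzmem, hfz⟩ := hsub h0mem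
    refine ⟨z, lt_of_lt_of_le hz0 hzmem.1, ?_⟩
    simp only [hf] at hfz
    linarith
  -- uniqueness helper
  have unlt : ∀ a b : ℝ, 0 < a → a < b →
      a = c * (1 - Real.exp (-a * M)) → b = c * (1 - Real.exp (-b * M)) → False := by
    intro a b ha hab hea heb
    have hb : 0 < b := ha.trans hab
    have hl : 0 < a / b := div_pos ha hb
    have hl1 : a / b < 1 := (div_lt_one hb).2 hab
    have hne : (-b * M) ≠ (0:ℝ) := by nlinarith
    have hkey := strictConvexOn_exp.2 (Set.mem_univ (-b * M)) (Set.mem_univ (0:ℝ))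
        hne hl (by linarith : (0:ℝ) < 1 - a / b) (by ring)
    rw [smul_eq_mul, smul_eq_mul, smul_eq_mul, smul_eq_mul, Real.exp_zero] at hkey
    have harg : a / b * (-b * M) + (1 - a / b) * 0 = -a * M := by
      field_simp; ring
    rw [harg] at hkey
    have h1 : (a / b) * (1 - Real.exp (-b * M)) < 1 - Real.exp (-a * M) := by
      nlinarith
    have h2 : (a / b) * b < a := by
      calc (a / b) * b = (a / b) * (c * (1 - Real.exp (-b * M))) := by rw [← heb]
        _ = c * ((a / b) * (1 - Real.exp (-b * M))) := by ring
        _ < c * (1 - Real.exp (-a * M)) := mul_lt_mul_of_pos_left h1 hc0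
        _ = a := hea.symm
    rw [div_mul_cancel₀ a (ne_of_gt hb)] at h2
    exact lt_irrefl a h2
  refine ⟨⟨fwd, exi⟩, fun h => ?_⟩
  obtain ⟨z, hz⟩ := exi h
  refine ⟨z, hz, fun y hy => ?_⟩
  rcases lt_trichotomy y z with h' | h' | h'
  · exact absurd (unlt y z hy.1 h' hy.2 hz.2) not_false
  · exact h'
  · exact absurd (unlt z y hz.1 h' hz.2 hy.2) not_false
end

section
/- Let λ₁ > 0, M > 0 and 0 < p ≤ 1. The equation p·λ₁·e^{M Q} = Q + p·λ₁ has a solution Q < 0 if and only if p·λ₁·M > 1; moreover, when p·λ₁·M > 1 the negative solution is unique. -/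
open Real

/-- If `a*M ≤ 1` there is no negative root. -/
private lemma no_neg_root (a M Q : ℝ) (ha : 0 < a) (hM : 0 < M) (haM : a * M ≤ 1)
    (hQ : Q < 0) : Q + a < a * Real.exp (M * Q) := by
  have hne : M * Q ≠ 0 := (mul_neg_of_pos_of_neg hM hQ).ne
  have h1 : M * Q + 1 < Real.exp (M * Q) := Real.add_one_lt_exp hne
  nlinarith [mul_lt_mul_of_pos_left h1 ha]

/-- Two distinct negative roots are impossible (strict convexity of exp). -/
private lemma uniq_aux (a M Q Q' : ℝ) (ha : 0 < a) (hM : 0 < M)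
    (h1 : Q < Q') (h2 : Q' < 0)
    (e1 : a * Real.exp (M * Q) = Q + a) (e2 : a * Real.exp (M * Q') = Q' + a) : False := by
  have hQ0 : Q < 0 := h1.trans h2
  have hQne : Q ≠ 0 := hQ0.ne
  set t : ℝ := Q' / Q with ht
  have ht0 : 0 < t := div_pos_of_neg_of_neg h2 hQ0
  have ht1 : t < 1 := by
    rw [ht, div_lt_one_of_neg hQ0]
    exact h1
  have htQ : t * Q = Q' := div_mul_cancel₀ Q' hQne
  have hxne : M * Q ≠ (0 : ℝ) := (mul_neg_of_pos_of_neg hM hQ0).ne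
  have hconv := strictConvexOn_exp.2 (Set.mem_univ (M * Q)) (Set.mem_univ (0 : ℝ))
    hxne ht0 (by linarith : (0:ℝ) < 1 - t) (by ring)
  simp only [smul_eq_mul, mul_zero, add_zero, Real.exp_zero, mul_one] at hconv
  have hMQ' : t * (M * Q) = M * Q' := by rw [← htQ]; ring
  rw [hMQ'] at hconv
  have := mul_lt_mul_of_pos_left hconv ha
  rw [e2] at this
  nlinarith [this, e1]

private lemma exists_neg_root (a M : ℝ) (ha : 0 < a) (hM : 0 < M) (haM : 1 < a * M) :
    ∃ Q : ℝ, Q < 0 ∧ a * Real.exp (M * Q) = Q + a := by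
  set f : ℝ → ℝ := fun Q => a * Real.exp (M * Q) - Q - a with hf
  have hcont : Continuous f := by continuity
  set Q₁ : ℝ := (1 - a * M) / (2 * M) with hQ₁
  have hQ₁neg : Q₁ < 0 := div_neg_of_neg_of_pos (by linarith) (by linarith)
  set Q₀ : ℝ := -(a + 1) with hQ₀
  have hQ₀₁ : Q₀ < Q₁ := by
    rw [hQ₀, hQ₁, lt_div_iff₀ (by linarith : (0:ℝ) < 2 * M)]
    nlinarith
  have hfQ₀ : 0 < f Q₀ := by
    have : (0:ℝ) < a * Real.exp (M * Q₀) := by positivity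
    simp only [hf, hQ₀]; nlinarith
  have hfQ₁ : f Q₁ < 0 := by
    have hMQ₁ : M * Q₁ = (1 - a * M) / 2 := by
      rw [hQ₁]; field_simp
    have hkey : Real.exp (M * Q₁) * (1 - M * Q₁) ≤ 1 := by
      have h1 : 1 - M * Q₁ ≤ Real.exp (-(M * Q₁)) := by
        have := Real.add_one_le_exp (-(M * Q₁)); linarith
      calc Real.exp (M * Q₁) * (1 - M * Q₁)
          ≤ Real.exp (M * Q₁) * Real.exp (-(M * Q₁)) :=
            mul_le_mul_of_nonneg_left h1 (Real.exp_pos _).le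
        _ = 1 := by rw [← Real.exp_add]; ring_nf; exact Real.exp_zero
    have hE : 0 < Real.exp (M * Q₁) := Real.exp_pos _
    have h1MQ : 1 - M * Q₁ = (1 + a * M) / 2 := by rw [hMQ₁]; ring
    have hQa : Q₁ + a = (1 + a * M) / (2 * M) := by
      rw [hQ₁]; field_simp; ring
    simp only [hf]
    -- a * E < Q₁ + a
    have hpos : (0:ℝ) < 1 + a * M := by nlinarith
    have hEle : Real.exp (M * Q₁) ≤ 2 / (1 + a * M) := by
      rw [h1MQ] at hkey
      rw [le_div_iff₀ hpos]; nlinarith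
    have : a * Real.exp (M * Q₁) ≤ a * (2 / (1 + a * M)) :=
      mul_le_mul_of_nonneg_left hEle ha.le
    have hlt : a * (2 / (1 + a * M)) < Q₁ + a := by
      rw [hQa, mul_div_assoc', div_lt_div_iff₀ hpos (by linarith : (0:ℝ) < 2 * M)]
      nlinarith [mul_pos (sub_pos.mpr haM) (sub_pos.mpr haM)]
    linarith
  -- IVT
  have hsub := intermediate_value_Icc' hQ₀₁.le hcont.continuousOn
  have h0mem : (0:ℝ) ∈ Set.Icc (f Q₁) (f Q₀) := ⟨hfQ₁.le, hfQ₀.le⟩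
  obtain ⟨Q, hQmem, hfQ⟩ := hsub h0mem
  refine ⟨Q, lt_of_le_of_lt hQmem.2 hQ₁neg, ?_⟩
  simp only [hf] at hfQ
  linarith

/-- The equation `p λ₁ exp(M Q) = Q + p λ₁` has a negative solution iff
`p λ₁ M > 1`, and then the negative solution is unique. -/
theorem stmt2 (lam M p : ℝ) (hlam : 0 < lam) (hM : 0 < M)
    (hp0 : 0 < p) (hp1 : p ≤ 1) :
    ((∃ Q : ℝ, Q < 0 ∧ p * lam * Real.exp (M * Q) = Q + p * lam) ↔ 1 < p * lam * M)
    ∧ (1 < p * lam * M →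
        ∃! Q : ℝ, Q < 0 ∧ p * lam * Real.exp (M * Q) = Q + p * lam) := by
  have ha : 0 < p * lam := mul_pos hp0 hlam
  constructor
  · constructor
    · rintro ⟨Q, hQ, heq⟩
      by_contra h
      push_neg at h
      have := no_neg_root (p * lam) M Q ha hM h hQ
      linarith
    · intro h
      exact exists_neg_root (p * lam) M ha hM h
  · intro h
    obtain ⟨Q, hQ, heq⟩ := exists_neg_root (p * lam) M ha hM h
    refine ⟨Q, ⟨hQ, heq⟩, ?_⟩
    rintro Q' ⟨hQ', heq'⟩
    rcases lt_trichotomy Q' Q with hlt | heqQ | hgt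
    · exact absurd (uniq_aux (p * lam) M Q' Q ha hM hlt hQ heq' heq) (fun x => x)
    · exact heqQ
    · exact absurd (uniq_aux (p * lam) M Q Q' ha hM hgt hQ' heq heq') (fun x => x)
end

section
/- Let λ₁ > 0, M > 0, 0 < p ≤ 1 with p·λ₁·M > 1, and let Q < 0 satisfy p·λ₁·e^{M Q} = Q + p·λ₁. Define g(x) = (1 − e^{Q x})/M for 0 ≤ x < M and g(x) = −Q e^{Q x}/(M(Q + p·λ₁)) for x ≥ M, set F_X(t) = 1 − e^{−λ₁ t} and G(x) = ∫₀ˣ g(u)du. Then for every x with 0 ≤ x < M, G(x) = (1 − p)∫₀ˣ F_X(x − u) g(u) du + p·[ ∫_M^{M+x} F_X(x − u + M) g(u) du + ∫₀ˣ F_X(x − u) g(u) du ]. -/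
open Real MeasureTheory

/-- The stationary density of the buffer energy under the incremental on-off policy:
`g(x) = (1 - exp(Q x))/M` for `x < M` and `g(x) = -Q exp(Q x)/(M (Q + p λ₁))` for `x ≥ M`. -/
noncomputable def onOffDensity (lam M p Q : ℝ) (x : ℝ) : ℝ :=
  if x < M then (1 - Real.exp (Q * x)) / M
  else (-Q * Real.exp (Q * x)) / (M * (Q + p * lam))

/-!
With `A = ∫₀ˣ F_X(x - u) g(u) du` and `B` the integral over `[M, M + x]`, the claim reads
`G(x) = A + p B`. Shifting `B` by `M` and using `p λ₁ e^{MQ} = Q + p λ₁`, the density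
`p g(M + v)` becomes `-Q e^{Qv} / (M λ₁)`, so everything is an integral over `[0, x]`. There the integrand of
`G - (A + p B)` is the derivative of `-(1 - e^{-λ₁(x - u)})(1 - e^{Qu}) / (M λ₁)`,
which vanishes at both ends `u = 0` and `u = x`.
-/

section OnOffDensity

variable {lam M p Q u : ℝ}

theorem onOffDensity_of_lt (hu : u < M) : onOffDensity lam M p Q u = (1 - exp (Q * u)) / M :=
  if_pos hu

theorem onOffDensity_of_le (hu : M ≤ u) :
    onOffDensity lam M p Q u = -Q * exp (Q * u) / (M * (Q + p * lam)) :=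
  if_neg hu.not_gt

theorem mul_onOffDensity_add_of_nonneg (hplam : p * lam ≠ 0)
    (hQeq : p * lam * exp (M * Q) = Q + p * lam) (hu : 0 ≤ u) :
    p * onOffDensity lam M p Q (M + u) = -Q * exp (Q * u) / (M * lam) := by
  have hQp : Q + p * lam ≠ 0 := by
    rw [← hQeq]; exact mul_ne_zero hplam (exp_pos _).ne'
  have hp : p ≠ 0 := left_ne_zero_of_mul hplam
  have hlam : lam ≠ 0 := right_ne_zero_of_mul hplam
  rw [onOffDensity_of_le (by linarith), mul_add, exp_add, mul_comm Q M, ← hQeq]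
  field_simp

end OnOffDensity

theorem integral_one_sub_exp_eq_add_integral (lam Q M x : ℝ) (hlam : lam ≠ 0) :
    ∫ u in (0 : ℝ)..x, (1 - exp (Q * u)) / M =
      (∫ u in (0 : ℝ)..x, (1 - exp (-lam * (x - u))) * ((1 - exp (Q * u)) / M)) +
        ∫ u in (0 : ℝ)..x, (1 - exp (-lam * (x - u))) * (-Q * exp (Q * u) / (M * lam)) := by
  set Φ : ℝ → ℝ := fun u => -((1 - exp (-lam * (x - u))) * (1 - exp (Q * u))) / (M * lam)
  have hΦ : ∀ u, HasDerivAt Φ ((1 - exp (Q * u)) / M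
      - ((1 - exp (-lam * (x - u))) * ((1 - exp (Q * u)) / M)
        + (1 - exp (-lam * (x - u))) * (-Q * exp (Q * u) / (M * lam)))) u := by
    intro u
    have hF : HasDerivAt (fun u => 1 - exp (-lam * (x - u))) (-(lam * exp (-lam * (x - u)))) u :=
      ((((hasDerivAt_id u).const_sub x).const_mul (-lam)).exp.const_sub 1).congr_deriv (by simp; ring)
    have hE : HasDerivAt (fun u => 1 - exp (Q * u)) (-(Q * exp (Q * u))) u :=
      (((hasDerivAt_id u).const_mul Q).exp.const_sub 1).congr_deriv (by simp; ring)
    refine ((hF.mul hE).neg.div_const (M * lam)).congr_deriv ?_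
    rcases eq_or_ne M 0 with rfl | hM
    · simp
    · field_simp; ring
  have hcont : ∀ f : ℝ → ℝ, Continuous f → IntervalIntegrable f volume 0 x :=
    fun f hf => hf.intervalIntegrable 0 x
  rw [← sub_eq_zero, ← intervalIntegral.integral_add (hcont _ (by fun_prop)) (hcont _ (by fun_prop)),
    ← intervalIntegral.integral_sub (hcont _ (by fun_prop)) (hcont _ (by fun_prop)),
    intervalIntegral.integral_eq_sub_of_hasDerivAt (fun u _ => hΦ u) (hcont _ (by fun_prop))]
  simp [Φ]

theorem stmt3_general (lam M p Q : ℝ) (hlam : 0 < lam)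
    (hp0 : 0 < p) (hQeq : p * lam * Real.exp (M * Q) = Q + p * lam) :
    ∀ x : ℝ, 0 ≤ x → x < M →
      (∫ u in (0:ℝ)..x, onOffDensity lam M p Q u) =
        (1 - p) * (∫ u in (0:ℝ)..x,
            (1 - Real.exp (-lam * (x - u))) * onOffDensity lam M p Q u)
        + p * ((∫ u in M..(M + x),
              (1 - Real.exp (-lam * (x - u + M))) * onOffDensity lam M p Q u)
            + ∫ u in (0:ℝ)..x,
              (1 - Real.exp (-lam * (x - u))) * onOffDensity lam M p Q u) := by
  intro x hx0 hxM
  have hbelow : ∀ f : ℝ → ℝ, ∫ u in (0:ℝ)..x, f u * onOffDensity lam M p Q u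
      = ∫ u in (0:ℝ)..x, f u * ((1 - exp (Q * u)) / M) :=
    fun f => intervalIntegral.integral_congr fun u hu => by
      rw [Set.uIcc_of_le hx0] at hu
      rw [onOffDensity_of_lt (hu.2.trans_lt hxM)]
  have hshift : p * ∫ u in M..(M + x), (1 - exp (-lam * (x - u + M))) * onOffDensity lam M p Q u
      = ∫ u in (0:ℝ)..x, (1 - exp (-lam * (x - u))) * (-Q * exp (Q * u) / (M * lam)) := by
    have hsub := intervalIntegral.integral_comp_add_left (a := 0) (b := x)
      (fun u => (1 - exp (-lam * (x - u + M))) * onOffDensity lam M p Q u) M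
    rw [add_zero] at hsub
    rw [← hsub, ← intervalIntegral.integral_const_mul]
    refine intervalIntegral.integral_congr fun u hu => ?_
    rw [Set.uIcc_of_le hx0] at hu
    rw [mul_left_comm, mul_onOffDensity_add_of_nonneg (by positivity) hQeq hu.1]
    ring_nf
  have hG := hbelow fun _ => 1
  simp only [one_mul] at hG
  rw [hG, hbelow, mul_add, hshift, integral_one_sub_exp_eq_add_integral lam Q M x hlam.ne']
  ring

/-- Verification of Theorem 4 (case `0 ≤ x < M`): the candidate stationary density `g`
satisfies the steady-state integral equation for the CDF `G(x) = ∫₀ˣ g`. -/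
theorem stmt3 (lam M p Q : ℝ) (hlam : 0 < lam) (hM : 0 < M)
    (hp0 : 0 < p) (hp1 : p ≤ 1) (hphi : 1 < p * lam * M)
    (hQneg : Q < 0) (hQeq : p * lam * Real.exp (M * Q) = Q + p * lam) :
    ∀ x : ℝ, 0 ≤ x → x < M →
      (∫ u in (0:ℝ)..x, onOffDensity lam M p Q u) =
        (1 - p) * (∫ u in (0:ℝ)..x,
            (1 - Real.exp (-lam * (x - u))) * onOffDensity lam M p Q u)
        + p * ((∫ u in M..(M + x),
              (1 - Real.exp (-lam * (x - u + M))) * onOffDensity lam M p Q u)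
            + ∫ u in (0:ℝ)..x,
              (1 - Real.exp (-lam * (x - u))) * onOffDensity lam M p Q u) :=
  stmt3_general lam M p Q hlam hp0 hQeq
end

section
/- Let Z > 0, W₂ > 0, W₃ > 0, M > 0 and Γ > 0. Then ∫₀^M Z e^{−Z x} ( ∫₀^Γ W₂ e^{−W₂ z} (1 − e^{−W₃ (Γ − z)/x}) dz ) dx = (1 − e^{−Z M})(1 − e^{−W₂ Γ}) + Z·W₂·∫₀^M x e^{−Z x} (e^{−W₂ Γ} − e^{−W₃ Γ/x})/(x W₂ − W₃) dx. (At the single point x = W₃/W₂, if it lies in (0,M), the integrand of the last integral has a removable singularity; since this is a set of measure zero it does not affect the Lebesgue integrals.) -/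
/-!
For fixed `x > 0` the inner integral is elementary: with `c = W₃ / x` it equals
`1 - e^{-W₂Γ} + W₂ · (e^{-W₂Γ} - e^{-cΓ}) / (W₂ - c)` whenever `c ≠ W₂`, i.e. off the single
point `x = W₃ / W₂`. The last factor is a difference quotient of `t ↦ e^{-tΓ}`, which is
`Γ`-Lipschitz on `t ≥ 0`; so the second integrand is bounded and integrable on `(0, M]`
despite its removable singularity, and the outer integral splits into two pieces.
-/

open Real MeasureTheory

lemma abs_exp_sub_exp_le_of_nonpos {p q : ℝ} (hp : p ≤ 0) (hq : q ≤ 0) :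
    |exp p - exp q| ≤ |p - q| := by
  wlog hqp : q ≤ p generalizing p q
  · rw [abs_sub_comm, abs_sub_comm p]
    exact this hq hp (le_of_not_ge hqp)
  rw [abs_of_nonneg (sub_nonneg.mpr (exp_le_exp.mpr hqp)), abs_of_nonneg (sub_nonneg.mpr hqp)]
  calc exp p - exp q = exp p * (1 - exp (q - p)) := by rw [mul_sub, ← exp_add]; ring_nf
    _ ≤ 1 * (1 - exp (q - p)) := by
        gcongr
        · exact sub_nonneg.mpr (exp_le_one_iff.mpr (by linarith))
        · exact exp_le_one_iff.mpr hp
    _ ≤ p - q := by linarith [add_one_le_exp (q - p)]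

lemma abs_slope_exp_neg_mul_le {a b Γ : ℝ} (ha : 0 ≤ a) (hb : 0 ≤ b) (hΓ : 0 ≤ Γ) :
    |slope (fun t ↦ exp (-t * Γ)) a b| ≤ Γ := by
  rcases eq_or_ne b a with rfl | hba
  · simpa using hΓ
  rw [slope_def_field, abs_div, div_le_iff₀ (abs_pos.mpr (sub_ne_zero.mpr hba))]
  calc |exp (-b * Γ) - exp (-a * Γ)| ≤ |-b * Γ - -a * Γ| :=
        abs_exp_sub_exp_le_of_nonpos (by nlinarith) (by nlinarith)
    _ = Γ * |b - a| := by
        rw [show -b * Γ - -a * Γ = -(Γ * (b - a)) by ring, abs_neg, abs_mul, abs_of_nonneg hΓ]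

lemma intervalIntegrable_mul_slope_exp_neg_mul {f : ℝ → ℝ} (hf : Continuous f) {a b Γ M : ℝ}
    (ha : 0 ≤ a) (hb : 0 ≤ b) (hΓ : 0 ≤ Γ) (hM : 0 ≤ M) :
    IntervalIntegrable (fun x ↦ f x * slope (fun t ↦ exp (-t * Γ)) (b / x) a) volume 0 M := by
  rw [intervalIntegrable_iff_integrableOn_Ioc_of_le hM]
  refine (hf.integrableOn_Ioc (μ := volume)).mul_bdd (c := Γ) ?_ ?_
  · simp only [slope_def_field]
    exact Measurable.aestronglyMeasurable (by fun_prop)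
  · filter_upwards [ae_restrict_mem measurableSet_Ioc] with x hx
    exact abs_slope_exp_neg_mul_le (div_nonneg hb hx.1.le) ha hΓ

lemma integral_mul_exp_neg_mul (k a b : ℝ) :
    ∫ x in a..b, k * exp (-k * x) = exp (-k * a) - exp (-k * b) := by
  have hderiv (x : ℝ) : HasDerivAt (fun x ↦ -exp (-k * x)) (k * exp (-k * x)) x :=
    ((hasDerivAt_id x).const_mul (-k)).exp.neg.congr_deriv (by simp only [id]; ring)
  rw [intervalIntegral.integral_eq_sub_of_hasDerivAt (fun x _ ↦ hderiv x)
    (by apply Continuous.intervalIntegrable; fun_prop)]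
  ring

lemma integral_exp_mul {k : ℝ} (hk : k ≠ 0) (a b : ℝ) :
    ∫ x in a..b, exp (k * x) = (exp (k * b) - exp (k * a)) / k := by
  rw [intervalIntegral.integral_comp_mul_left (fun x ↦ exp x) hk, integral_exp, smul_eq_mul,
    inv_mul_eq_div]

lemma integral_mul_exp_neg_mul_mul_one_sub_exp {a c : ℝ} (hac : a ≠ c) (Γ : ℝ) :
    ∫ z in (0:ℝ)..Γ, a * exp (-a * z) * (1 - exp (-c * (Γ - z))) =
      1 - exp (-a * Γ) + a * slope (fun t ↦ exp (-t * Γ)) c a := by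
  have hsplit : (fun z ↦ a * exp (-a * z) * (1 - exp (-c * (Γ - z)))) =
      fun z ↦ a * exp (-a * z) - a * exp (-c * Γ) * exp ((c - a) * z) := by
    ext z
    rw [mul_sub, mul_one, mul_assoc a (exp _), ← exp_add, mul_assoc a (exp _), ← exp_add]
    ring_nf
  have hexp : exp (-c * Γ) * exp ((c - a) * Γ) = exp (-a * Γ) := by rw [← exp_add]; ring_nf
  rw [hsplit, intervalIntegral.integral_sub (by apply Continuous.intervalIntegrable; fun_prop)
      (by apply Continuous.intervalIntegrable; fun_prop),
    integral_mul_exp_neg_mul, intervalIntegral.integral_const_mul,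
    integral_exp_mul (sub_ne_zero.mpr hac.symm), slope_def_field, mul_zero, mul_zero, exp_zero,
    ← hexp, ← neg_sub c a]
  field_simp
  ring

lemma mul_div_mul_sub_eq_slope_exp_neg_mul {x : ℝ} (hx : x ≠ 0) (a b Γ : ℝ) :
    x * (exp (-a * Γ) - exp (-b * Γ / x)) / (x * a - b) =
      slope (fun t ↦ exp (-t * Γ)) (b / x) a := by
  rw [slope_def_field, show x * a - b = x * (a - b / x) by field_simp, mul_div_mul_left _ _ hx]
  congr 3
  ring

theorem stmt10_general (Z W2 W3 M Γ : ℝ) (hW2 : 0 < W2) (hW3 : 0 < W3)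
    (hM : 0 < M) (hΓ : 0 < Γ) :
    (∫ x in (0:ℝ)..M, Z * Real.exp (-Z * x) *
        ∫ z in (0:ℝ)..Γ, W2 * Real.exp (-W2 * z) * (1 - Real.exp (-W3 * (Γ - z) / x)))
      = (1 - Real.exp (-Z * M)) * (1 - Real.exp (-W2 * Γ))
        + Z * W2 * ∫ x in (0:ℝ)..M,
            x * Real.exp (-Z * x) * (Real.exp (-W2 * Γ) - Real.exp (-W3 * Γ / x))
              / (x * W2 - W3) := by
  set S : ℝ → ℝ := fun x ↦ slope (fun t ↦ exp (-t * Γ)) (W3 / x) W2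
  have hslope : ∀ᵐ x, x ∈ Set.uIoc 0 M →
      x * exp (-Z * x) * (exp (-W2 * Γ) - exp (-W3 * Γ / x)) / (x * W2 - W3) =
        exp (-Z * x) * S x := by
    refine Filter.Eventually.of_forall fun x hx ↦ ?_
    rw [Set.uIoc_of_le hM.le] at hx
    rw [mul_right_comm, mul_div_right_comm,
      mul_div_mul_sub_eq_slope_exp_neg_mul hx.1.ne', mul_comm]
  have hinner : ∀ᵐ x, x ∈ Set.uIoc 0 M → Z * exp (-Z * x) *
      (∫ z in (0:ℝ)..Γ, W2 * exp (-W2 * z) * (1 - exp (-W3 * (Γ - z) / x))) =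
        Z * exp (-Z * x) * (1 - exp (-W2 * Γ)) + Z * W2 * (exp (-Z * x) * S x) := by
    filter_upwards [(Set.countable_singleton (W3 / W2)).ae_notMem volume] with x hsing _
    have hW2x : W2 ≠ W3 / x := fun h ↦ hsing (by rw [h, div_div_cancel₀ hW3.ne']; rfl)
    have hcoef (z : ℝ) : -W3 * (Γ - z) / x = -(W3 / x) * (Γ - z) := by ring
    simp only [hcoef, integral_mul_exp_neg_mul_mul_one_sub_exp hW2x]
    ring
  rw [intervalIntegral.integral_congr_ae hinner, intervalIntegral.integral_congr_ae hslope,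
    intervalIntegral.integral_add (by apply Continuous.intervalIntegrable; fun_prop)
      ((intervalIntegrable_mul_slope_exp_neg_mul (by fun_prop) hW2.le hW3.le hΓ.le
        hM.le).const_mul _),
    intervalIntegral.integral_mul_const, integral_mul_exp_neg_mul,
    intervalIntegral.integral_const_mul, mul_zero, exp_zero]

/-- Appendix D computation of `P{B·Ψ + γ_SD < Γ, B < M}` for the incremental
best-effort policy.  (The possible singularity of the last integrand at
`x = W₃/W₂` is a removable one on a measure-zero set.) -/
theorem stmt10 (Z W2 W3 M Γ : ℝ) (hZ : 0 < Z) (hW2 : 0 < W2) (hW3 : 0 < W3)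
    (hM : 0 < M) (hΓ : 0 < Γ) :
    (∫ x in (0:ℝ)..M, Z * Real.exp (-Z * x) *
        ∫ z in (0:ℝ)..Γ, W2 * Real.exp (-W2 * z) * (1 - Real.exp (-W3 * (Γ - z) / x)))
      = (1 - Real.exp (-Z * M)) * (1 - Real.exp (-W2 * Γ))
        + Z * W2 * ∫ x in (0:ℝ)..M,
            x * Real.exp (-Z * x) * (Real.exp (-W2 * Γ) - Real.exp (-W3 * Γ / x))
              / (x * W2 - W3) :=
  stmt10_general Z W2 W3 M Γ hW2 hW3 hM hΓ
end

section
/- Let λ₁ > 0, W₂ > 0, W₃ > 0 and Γ > 0. Then ∫₀^∞ λ₁ e^{−λ₁ x} ( ∫₀^Γ W₂ e^{−W₂ z} (1 − e^{−2W₃ (Γ − z)/x}) dz ) dx = (1 − e^{−W₂ Γ}) + λ₁·W₂·∫₀^∞ x e^{−λ₁ x} (e^{−W₂ Γ} − e^{−2W₃ Γ/x})/(x W₂ − 2W₃) dx. (At the single point x = 2W₃/W₂ the integrand of the last integral has a removable singularity; since this is a set of measure zero it does not affect the Lebesgue integrals.) -/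
open Real MeasureTheory Set

/-!
For fixed `x > 0` put `a = 2W₃/x`. The inner integrand is `W₂e^{-W₂z} - W₂e^{-W₂z - a(Γ-z)}`,
which has an elementary antiderivative as long as `a ≠ W₂`, i.e. off the single point
`x = 2W₃/W₂`. The remaining difference quotient `(e^{-W₂Γ} - e^{-aΓ}) / (W₂ - a)` is bounded by
`Γ` because `exp` is 1-Lipschitz on `(-∞, 0]`, so the second integrand is dominated by
`Γ e^{-λ₁x}` and the outer integral splits; the first part integrates the exponential density
to `1`.
-/

lemma abs_exp_sub_exp_le_of_nonpos_s11 {a b : ℝ} (ha : a ≤ 0) (hb : b ≤ 0) :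
    |exp a - exp b| ≤ |a - b| := by
  wlog hba : b ≤ a generalizing a b
  · rw [abs_sub_comm, abs_sub_comm a b]
    exact this hb ha (le_of_not_ge hba)
  have h_one_sub : 1 - exp (b - a) ≤ a - b := by linarith [add_one_le_exp (b - a)]
  have h_factor : exp a - exp b = exp a * (1 - exp (b - a)) := by
    rw [mul_sub, ← exp_add]; ring_nf
  rw [abs_of_nonneg (by linarith [exp_le_exp.mpr hba]), abs_of_nonneg (by linarith), h_factor]
  calc exp a * (1 - exp (b - a)) ≤ 1 * (a - b) :=
        mul_le_mul (exp_le_one_iff.mpr ha) h_one_sub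
          (by linarith [exp_le_one_iff.mpr (sub_nonpos.mpr hba)]) zero_le_one
    _ = a - b := one_mul _

lemma abs_exp_neg_mul_sub_exp_neg_mul_div_sub_le {W a Γ : ℝ} (hW : 0 ≤ W) (ha : 0 ≤ a)
    (hΓ : 0 ≤ Γ) :
    |(exp (-W * Γ) - exp (-a * Γ)) / (W - a)| ≤ Γ := by
  rcases eq_or_ne W a with rfl | hne
  · simpa using hΓ
  rw [abs_div, div_le_iff₀ (abs_pos.mpr (sub_ne_zero.mpr hne))]
  calc |exp (-W * Γ) - exp (-a * Γ)| ≤ |-W * Γ - -a * Γ| :=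
        abs_exp_sub_exp_le_of_nonpos_s11 (by nlinarith) (by nlinarith)
    _ = Γ * |W - a| := by
        rw [show -W * Γ - -a * Γ = -(Γ * (W - a)) by ring, abs_neg, abs_mul, abs_of_nonneg hΓ]

lemma integral_mul_exp_neg_mul_one_sub_exp {W a : ℝ} (Γ : ℝ) (hne : W ≠ a) :
    ∫ z in (0:ℝ)..Γ, W * exp (-W * z) * (1 - exp (-a * (Γ - z)))
      = (1 - exp (-W * Γ)) + W * (exp (-W * Γ) - exp (-a * Γ)) / (W - a) := by
  have hWa : W - a ≠ 0 := sub_ne_zero.mpr hne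
  set F : ℝ → ℝ := fun z => -exp (-W * z) + W / (W - a) * exp (-W * z - a * (Γ - z))
  have hF : ∀ z, HasDerivAt F (W * exp (-W * z) * (1 - exp (-a * (Γ - z)))) z := by
    intro z
    have h₁ := (((hasDerivAt_id' z).const_mul (-W)).exp).neg
    have h₂ := ((((hasDerivAt_id' z).const_mul (-W)).sub
      (((hasDerivAt_id' z).const_sub Γ).const_mul a)).exp).const_mul (W / (W - a))
    refine (h₁.add h₂).congr_deriv ?_
    have : exp (-W * z - a * (Γ - z)) = exp (-W * z) * exp (-a * (Γ - z)) := by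
      rw [← exp_add]; ring_nf
    simp only [Pi.sub_apply, this]
    field_simp
    ring
  rw [intervalIntegral.integral_eq_sub_of_hasDerivAt (fun z _ => hF z)
    (Continuous.intervalIntegrable (by fun_prop) _ _)]
  simp only [F, mul_zero, sub_zero, exp_zero]
  field_simp
  ring_nf

lemma mul_div_mul_sub_eq_div_sub_div {x : ℝ} (hx : x ≠ 0) (E W c : ℝ) :
    x * E / (x * W - c) = E / (W - c / x) := by
  rw [sub_div' hx, div_div_eq_mul_div, mul_comm W x, mul_comm E x]

lemma integral_mul_exp_neg_mul_one_sub_exp_div {W2 W3 x : ℝ} (Γ : ℝ) (hx : 0 < x)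
    (hne : x * W2 - 2 * W3 ≠ 0) :
    ∫ z in (0:ℝ)..Γ, W2 * exp (-W2 * z) * (1 - exp (-2 * W3 * (Γ - z) / x))
      = (1 - exp (-W2 * Γ))
        + W2 * (x * (exp (-W2 * Γ) - exp (-2 * W3 * Γ / x)) / (x * W2 - 2 * W3)) := by
  have hW2 : W2 ≠ 2 * W3 / x := by
    rw [ne_eq, eq_div_iff hx.ne', mul_comm]; exact sub_ne_zero.mp hne
  have h_exponent : ∀ y, -2 * W3 * y / x = -(2 * W3 / x) * y := fun y => by ring
  simp_rw [h_exponent, integral_mul_exp_neg_mul_one_sub_exp Γ hW2,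
    mul_div_mul_sub_eq_div_sub_div hx.ne', mul_div_assoc]

lemma norm_mul_exp_mul_div_le {lam W2 W3 Γ x : ℝ} (hW2 : 0 ≤ W2) (hW3 : 0 ≤ W3) (hΓ : 0 ≤ Γ)
    (hx : 0 < x) :
    ‖x * exp (-lam * x) * (exp (-W2 * Γ) - exp (-2 * W3 * Γ / x)) / (x * W2 - 2 * W3)‖
      ≤ Γ * exp (-lam * x) := by
  have h_exponent : -2 * W3 * Γ / x = -(2 * W3 / x) * Γ := by ring
  rw [mul_comm x, mul_assoc, mul_div_assoc, mul_div_mul_sub_eq_div_sub_div hx.ne', h_exponent,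
    norm_mul, norm_of_nonneg (exp_pos _).le, mul_comm Γ]
  exact mul_le_mul_of_nonneg_left
    (abs_exp_neg_mul_sub_exp_neg_mul_div_sub_le hW2 (by positivity) hΓ) (exp_pos _).le

lemma integrableOn_mul_exp_mul_div {lam W2 W3 Γ : ℝ} (hlam : 0 < lam) (hW2 : 0 ≤ W2)
    (hW3 : 0 ≤ W3) (hΓ : 0 ≤ Γ) :
    IntegrableOn (fun x => x * exp (-lam * x) * (exp (-W2 * Γ) - exp (-2 * W3 * Γ / x))
      / (x * W2 - 2 * W3)) (Ioi 0) := by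
  refine Integrable.mono' ((integrableOn_exp_mul_Ioi (neg_lt_zero.mpr hlam) 0).const_mul Γ)
    ((Measurable.div (by fun_prop) (by fun_prop)).aestronglyMeasurable) ?_
  filter_upwards [ae_restrict_mem measurableSet_Ioi] with x hx
  exact norm_mul_exp_mul_div_le hW2 hW3 hΓ hx

/-- Outage probability term for the harvest-use (HU) architecture.  (The possible
singularity of the last integrand at `x = 2W₃/W₂` is a removable one on a
measure-zero set.) -/
theorem stmt11 (lam W2 W3 Γ : ℝ) (hlam : 0 < lam) (hW2 : 0 < W2) (hW3 : 0 < W3)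
    (hΓ : 0 < Γ) :
    (∫ x in Set.Ioi (0:ℝ), lam * Real.exp (-lam * x) *
        ∫ z in (0:ℝ)..Γ, W2 * Real.exp (-W2 * z) * (1 - Real.exp (-2 * W3 * (Γ - z) / x)))
      = (1 - Real.exp (-W2 * Γ))
        + lam * W2 * ∫ x in Set.Ioi (0:ℝ),
            x * Real.exp (-lam * x) * (Real.exp (-W2 * Γ) - Real.exp (-2 * W3 * Γ / x))
              / (x * W2 - 2 * W3) := by
  have h_regular : ∀ᵐ x : ℝ, x * W2 - 2 * W3 ≠ 0 := by
    filter_upwards [compl_mem_ae_iff.mpr (measure_singleton (2 * W3 / W2))] with x hx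
    rwa [sub_ne_zero, ne_eq, ← eq_div_iff hW2.ne']
  have h_integrand : ∀ᵐ x ∂volume.restrict (Ioi 0),
      lam * exp (-lam * x) *
          ∫ z in (0:ℝ)..Γ, W2 * exp (-W2 * z) * (1 - exp (-2 * W3 * (Γ - z) / x))
        = lam * exp (-lam * x) * (1 - exp (-W2 * Γ))
          + lam * W2 * (x * exp (-lam * x) * (exp (-W2 * Γ) - exp (-2 * W3 * Γ / x))
              / (x * W2 - 2 * W3)) := by
    filter_upwards [ae_restrict_mem measurableSet_Ioi, ae_restrict_of_ae h_regular] with x hx hne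
    rw [integral_mul_exp_neg_mul_one_sub_exp_div Γ hx hne]
    ring
  rw [integral_congr_ae h_integrand, integral_add
      (((integrableOn_exp_mul_Ioi (neg_lt_zero.mpr hlam) 0).const_mul lam).mul_const _)
      ((integrableOn_mul_exp_mul_div hlam hW2.le hW3.le hΓ.le).const_mul _),
    integral_mul_const, integral_const_mul, integral_const_mul,
    integral_exp_mul_Ioi (neg_lt_zero.mpr hlam), mul_zero, exp_zero, neg_div_neg_eq,
    mul_one_div_cancel hlam.ne', one_mul]
end

section
/- Let 0 < Γ ≤ Γ′, let W₂, W₃, W₄, λ₁, M > 0 with W₃ ≠ M·W₂, set p = 1 − e^{−W₂Γ′}, assume p·λ₁·M > 1, and let Z > 0 satisfy Z = p·λ₁·(1 − e^{−Z M}). Let γ_SR, γ_SD, H, B be independent random variables where γ_SR is exponential with rate W₄, γ_SD is exponential with rate W₂, H is exponential with rate W₃, and B has density Z e^{−Z x} on (0,∞). Then, with W₁ = W₃/M, P({γ_SD < Γ′} ∩ {min(γ_SR, min(B, M)·H + γ_SD) < Γ}) = (1 − e^{−W₄ Γ})(1 − e^{−W₂ Γ′}) + e^{−W₄ Γ}·[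 e^{−Z M}( (1 − e^{−W₂ Γ}) + W₂(e^{−W₁ Γ} − e^{−W₂ Γ})/(W₁ − W₂) ) + (1 − e^{−Z M})(1 − e^{−W₂ Γ}) + W₂·Z·∫₀^M x e^{−Z x}(e^{−W₂ Γ} − e^{−W₃ Γ/x})/(x W₂ − W₃) dx ]. -/
open Real MeasureTheory ProbabilityTheory

/-!
Put `T = min(B, M)·H + γ_SD`. Since `T ≥ γ_SD` almost surely and `Γ ≤ Γ'`, the event is, up to
a null set, the disjoint union of `{γ_SD < Γ'} ∩ {γ_SR < Γ}` and `{γ_SR ≥ Γ} ∩ {T < Γ}`, and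
independence factors both probabilities. Given `B = x`, the variable `min(x, M)·H` is exponential
of rate `W₃ / min(x, M)`, so `P(T < Γ | B = x)` is the distribution function of a sum of two
independent exponentials. Integrating it against the density of `B`, the part `x > M` gives the
`e^{-ZM}` term and the part `x ≤ M` the integral.
-/

open Set Filter

namespace MeasureTheory

lemma measureReal_prod_apply {α β : Type*} [MeasurableSpace α] [MeasurableSpace β]
    {μ : Measure α} {ν : Measure β} [SFinite μ] [IsFiniteMeasure ν] {s : Set (α × β)}
    (hs : MeasurableSet s) :
    (μ.prod ν).real s = ∫ x, ν.real (Prod.mk x ⁻¹' s) ∂μ := by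
  rw [measureReal_def, Measure.prod_apply hs,
    ← integral_toReal (measurable_measure_prodMk_left hs).aemeasurable
      (ae_of_all _ fun _ => measure_lt_top _ _)]
  rfl

end MeasureTheory

namespace ProbabilityTheory

instance (r : ℝ) : NullSingletonClass (expMeasure r) :=
  inferInstanceAs (NullSingletonClass (volume.withDensity (exponentialPDF r)))

section Exponential

variable {r : ℝ}

lemma expMeasure_real_Iio (hr : 0 < r) (t : ℝ) :
    (expMeasure r).real (Iio t) = if 0 ≤ t then 1 - exp (-r * t) else 0 := by
  have := isProbabilityMeasure_expMeasure hr
  rw [measureReal_congr Iio_ae_eq_Iic, ← cdf_eq_real, cdf_expMeasure_eq hr, neg_mul]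

lemma ae_expMeasure_pos (hr : 0 < r) : ∀ᵐ x ∂expMeasure r, 0 < x := by
  have := isProbabilityMeasure_expMeasure hr
  have h : (expMeasure r).real (Iic 0) = 0 := by
    rw [← cdf_eq_real, cdf_expMeasure_eq hr]; simp
  rw [measureReal_eq_zero_iff] at h
  exact measure_mono_null (fun x (hx : ¬ 0 < x) => not_lt.1 hx) h

lemma integral_expMeasure (hr : 0 < r) (f : ℝ → ℝ) :
    ∫ x, f x ∂expMeasure r = ∫ x in Ioi 0, r * exp (-r * x) * f x := by
  rw [show expMeasure r = volume.withDensity (exponentialPDF r) from rfl,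
    integral_withDensity_eq_integral_toReal_smul
      (show Measurable (exponentialPDF r) from (measurable_exponentialPDFReal r).ennreal_ofReal)
      (ae_of_all _ fun _ => ENNReal.ofReal_lt_top), ← integral_Ici_eq_integral_Ioi,
    ← setIntegral_eq_integral_of_forall_compl_eq_zero]
  · refine setIntegral_congr_fun measurableSet_Ici fun x (hx : 0 ≤ x) => ?_
    simp [exponentialPDF_of_nonneg hx, hr.le, (exp_pos _).le, ENNReal.toReal_ofReal]
  · intro x (hx : ¬ 0 ≤ x)
    simp [exponentialPDF_of_neg (not_le.1 hx)]

lemma integral_Ioi_mul_exp_neg_mul (hr : 0 < r) (c : ℝ) :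
    ∫ x in Ioi c, r * exp (-r * x) = exp (-r * c) := by
  rw [integral_const_mul, integral_exp_mul_Ioi (neg_lt_zero.2 hr)]
  field_simp

lemma expMeasure_map_const_mul (hr : 0 < r) {c : ℝ} (hc : 0 < c) :
    (expMeasure r).map (c * ·) = expMeasure (r / c) := by
  have := isProbabilityMeasure_expMeasure hr
  have := isProbabilityMeasure_expMeasure (div_pos hr hc)
  have : IsProbabilityMeasure ((expMeasure r).map (c * ·)) :=
    Measure.isProbabilityMeasure_map (by fun_prop)
  refine Measure.eq_of_cdf _ _ (StieltjesFunction.ext fun t => ?_)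
  have hpre : (c * ·) ⁻¹' Iic t = Iic (t / c) := by
    ext x; simp [le_div_iff₀ hc, mul_comm]
  rw [cdf_eq_real, map_measureReal_apply (by fun_prop) measurableSet_Iic, hpre, ← cdf_eq_real,
    cdf_expMeasure_eq hr, cdf_expMeasure_eq (div_pos hr hc), div_mul_eq_mul_div, mul_div_assoc]
  exact if_congr (by rw [le_div_iff₀ hc, zero_mul]) rfl rfl

lemma integral_expMeasure_comp_min (hr : 0 < r) {M C : ℝ} (hM : 0 ≤ M) {f : ℝ → ℝ}
    (hf : Measurable f) (hC : ∀ x, ‖f x‖ ≤ C) :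
    ∫ x, f (min x M) ∂expMeasure r
      = exp (-r * M) * f M + ∫ x in 0..M, r * exp (-r * x) * f x := by
  have hint : IntegrableOn (fun x => r * exp (-r * x) * f (min x M)) (Ioi 0) :=
    ((exp_neg_integrableOn_Ioi 0 hr).const_mul r).mul_bdd
      (hf.comp (measurable_id.min measurable_const)).aestronglyMeasurable (ae_of_all _ fun _ => hC _)
  rw [integral_expMeasure hr, ← Ioc_union_Ioi_eq_Ioi hM,
    setIntegral_union (Ioc_disjoint_Ioi le_rfl) measurableSet_Ioi
      (hint.mono_set Ioc_subset_Ioi_self) (hint.mono_set (Ioi_subset_Ioi hM)),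
    intervalIntegral.integral_of_le hM, add_comm]
  congr 1
  · rw [setIntegral_congr_fun measurableSet_Ioi fun x (hx : M < x) => by rw [min_eq_right hx.le],
      integral_mul_const, integral_Ioi_mul_exp_neg_mul hr]
  · exact setIntegral_congr_fun measurableSet_Ioc fun x hx => by rw [min_eq_left hx.2]

end Exponential

/-- The distribution function of `X + Y` for independent `X ~ Exp(a)`, `Y ~ Exp(b)`;
meaningful only for `a ≠ b`. -/
noncomputable def hypoexpCDF (a b t : ℝ) : ℝ :=
  1 - exp (-b * t) + b * (exp (-a * t) - exp (-b * t)) / (a - b)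

lemma measureReal_expMeasure_prod_add_lt {a b : ℝ} (ha : 0 < a) (hb : 0 < b) (hab : a ≠ b)
    {t : ℝ} (ht : 0 ≤ t) :
    ((expMeasure a).prod (expMeasure b)).real {q | q.1 + q.2 < t} = hypoexpCDF a b t := by
  have := isProbabilityMeasure_expMeasure ha
  have := isProbabilityMeasure_expMeasure hb
  have hslice (x : ℝ) : Prod.mk x ⁻¹' {q : ℝ × ℝ | q.1 + q.2 < t} = Iio (t - x) := by
    ext y; simp [lt_sub_iff_add_lt']
  have hs : MeasurableSet {q : ℝ × ℝ | q.1 + q.2 < t} :=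
    measurableSet_lt (by fun_prop) (by fun_prop)
  simp_rw [measureReal_prod_apply hs, hslice, integral_expMeasure ha, expMeasure_real_Iio hb]
  rw [setIntegral_eq_of_subset_of_forall_sdiff_eq_zero measurableSet_Ioi Ioc_subset_Ioi_self
    fun x (⟨hx0, hxt⟩ : x ∈ Ioi 0 \ Ioc 0 t) => by
      have : t < x := not_le.1 fun h => hxt ⟨hx0, h⟩
      simp [not_le.2 (sub_neg.2 this)],
    ← intervalIntegral.integral_of_le ht]
  have hintegrand : ∀ x ∈ uIcc 0 t,
      a * exp (-a * x) * (if 0 ≤ t - x then 1 - exp (-b * (t - x)) else 0)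
        = a * exp (-a * x) - a * exp ((b - a) * x - b * t) := by
    intro x hx
    rw [uIcc_of_le ht] at hx
    rw [if_pos (sub_nonneg.2 hx.2), mul_sub, mul_one, mul_assoc, ← exp_add]
    ring_nf
  have hderiv : ∀ x ∈ uIcc 0 t, HasDerivAt
      (fun x => -exp (-(a * x)) - a / (b - a) * exp ((b - a) * x - b * t))
      (a * exp (-a * x) - a * exp ((b - a) * x - b * t)) x := by
    intro x _
    refine ((hasDerivAt_neg_exp_mul_exp (r := a) (x := x)).sub
      ((((hasDerivAt_id x).const_mul (b - a)).sub_const (b * t)).exp.const_mul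
        (a / (b - a)))).congr_deriv ?_
    simp only [id_eq, mul_one, neg_mul]
    field_simp
  rw [intervalIntegral.integral_congr hintegrand,
    intervalIntegral.integral_eq_sub_of_hasDerivAt hderiv
      ((by fun_prop : Continuous _).intervalIntegrable _ _), hypoexpCDF,
    show (b - a) * t - b * t = -a * t by ring]
  simp only [mul_zero, neg_zero, exp_zero, zero_sub, neg_mul]
  field_simp
  ring

lemma measureReal_expMeasure_prod_mul_add_lt {a b c t : ℝ} (ha : 0 < a) (hb : 0 < b) (hc : 0 < c)
    (hab : a / c ≠ b) (ht : 0 ≤ t) :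
    ((expMeasure a).prod (expMeasure b)).real {q | c * q.1 + q.2 < t}
      = hypoexpCDF (a / c) b t := by
  have := isProbabilityMeasure_expMeasure ha
  have := isProbabilityMeasure_expMeasure hb
  rw [← measureReal_expMeasure_prod_add_lt (div_pos ha hc) hb hab ht,
    ← expMeasure_map_const_mul ha hc, ← Measure.map_id (μ := expMeasure b),
    Measure.map_prod_map _ _ (by fun_prop) measurable_id, Measure.map_id,
    map_measureReal_apply (by fun_prop) (measurableSet_lt (by fun_prop) (by fun_prop))]
  rfl

lemma hypoexpCDF_div_left (a b t : ℝ) {x : ℝ} (hx : x ≠ 0) :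
    hypoexpCDF (a / x) b t
      = 1 - exp (-b * t) + b * (x * (exp (-b * t) - exp (-a * t / x)) / (x * b - a)) := by
  rw [hypoexpCDF, show -(a / x) * t = -a * t / x by ring,
    show a / x - b = -(x * b - a) / x by field_simp; ring, div_div_eq_mul_div, div_neg]
  ring

lemma measureReal_expMeasure_prod_min_mul_add_lt {r a b M t : ℝ} (hr : 0 < r) (ha : 0 < a)
    (hb : 0 < b) (hM : 0 < M) (ht : 0 ≤ t) (hne : a ≠ M * b) :
    ((expMeasure r).prod ((expMeasure a).prod (expMeasure b))).real
        {p | min p.1 M * p.2.1 + p.2.2 < t}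
      = exp (-r * M) * hypoexpCDF (a / M) b t + (1 - exp (-r * M)) * (1 - exp (-b * t))
        + b * r * ∫ x in (0:ℝ)..M,
            x * exp (-r * x) * (exp (-b * t) - exp (-a * t / x)) / (x * b - a) := by
  have := isProbabilityMeasure_expMeasure hr
  have := isProbabilityMeasure_expMeasure ha
  have := isProbabilityMeasure_expMeasure hb
  set c₀ := 1 - exp (-b * t)
  set g : ℝ → ℝ := fun c => ((expMeasure a).prod (expMeasure b)).real {q | c * q.1 + q.2 < t}
  have hS : MeasurableSet {p : ℝ × ℝ × ℝ | p.1 * p.2.1 + p.2.2 < t} :=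
    measurableSet_lt (by fun_prop) (by fun_prop)
  have hg_meas : Measurable g := (measurable_measure_prodMk_left hS).ennreal_toReal
  have hc₀ : c₀ ∈ Icc 0 1 := ⟨sub_nonneg.2 (exp_le_one_iff.2 (by nlinarith)),
    sub_le_self _ (exp_pos _).le⟩
  have hg_mem (c : ℝ) : g c ∈ Icc 0 1 := ⟨measureReal_nonneg, measureReal_le_one⟩
  have hg_bound (c : ℝ) : ‖g c - c₀‖ ≤ 1 := by
    rw [Real.norm_eq_abs, abs_sub_le_iff]
    constructor <;> linarith [hc₀.1, hc₀.2, (hg_mem c).1, (hg_mem c).2]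
  have hg {c : ℝ} (hc : 0 < c) (hcb : a / c ≠ b) : g c = hypoexpCDF (a / c) b t :=
    measureReal_expMeasure_prod_mul_add_lt ha hb hc hcb ht
  have hshift : ∫ x, g (min x M) ∂expMeasure r = ∫ x, (g (min x M) - c₀) ∂expMeasure r + c₀ := by
    rw [integral_sub _ (integrable_const _), integral_const, probReal_univ, one_smul,
      sub_add_cancel]
    exact Integrable.of_bound
      (hg_meas.comp (measurable_id.min measurable_const)).aestronglyMeasurable 1
      (ae_of_all _ fun x => abs_le.2 ⟨by linarith [(hg_mem (min x M)).1], (hg_mem _).2⟩)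
  have hslice : ∫ x in (0:ℝ)..M, r * exp (-r * x) * (g x - c₀)
      = b * r * ∫ x in (0:ℝ)..M,
          x * exp (-r * x) * (exp (-b * t) - exp (-a * t / x)) / (x * b - a) := by
    rw [← intervalIntegral.integral_const_mul]
    refine intervalIntegral.integral_congr_ae ?_
    filter_upwards [Measure.ae_ne volume (a / b)] with x hx hxI
    have hx0 : 0 < x := (uIoc_of_le hM.le ▸ hxI).1
    rw [hg hx0 fun h => hx (by rw [← h]; field_simp), hypoexpCDF_div_left a b t hx0.ne']
    ring
  rw [measureReal_prod_apply (measurableSet_lt (by fun_prop) (by fun_prop))]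
  change ∫ x, g (min x M) ∂expMeasure r = _
  rw [hshift, integral_expMeasure_comp_min hr hM.le (hg_meas.sub_const c₀) hg_bound, hslice,
    hg hM fun h => hne (by rw [← h]; field_simp)]
  ring

lemma IndepSet.measureReal_inter_eq_mul {Ω : Type*} [MeasurableSpace Ω] {P : Measure Ω}
    {s t : Set Ω} (h : IndepSet s t P) : P.real (s ∩ t) = P.real s * P.real t := by
  simp only [measureReal_def, h.measure_inter_eq_mul, ENNReal.toReal_mul]

lemma measureReal_inter_union_of_indepSet {Ω : Type*} [MeasurableSpace Ω] {P : Measure Ω}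
    [IsProbabilityMeasure P] {A S T : Set Ω} (hS : MeasurableSet S) (hT : MeasurableSet T)
    (hAS : IndepSet A S P) (hST : IndepSet S T P) (hTA : T ≤ᵐ[P] A) :
    P.real (A ∩ (S ∪ T)) = P.real A * P.real S + (1 - P.real S) * P.real T := by
  have hae : (A ∩ (S ∪ T) : Set Ω) =ᵐ[P] (A ∩ S ∪ T \ S : Set Ω) :=
    eventuallyEq_set.2 <| hTA.mono fun ω (hω : ω ∈ T → ω ∈ A) => by
      simp only [mem_inter_iff, mem_union, Set.mem_sdiff]
      tauto
  have hdiff : P.real (T \ S) = P.real T - P.real S * P.real T := by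
    have h := measureReal_sdiff_add_inter hS (μ := P) (s := T)
    rw [inter_comm, hST.measureReal_inter_eq_mul] at h
    linarith
  rw [measureReal_congr hae,
    measureReal_union (disjoint_sdiff_self_right.mono_left inter_subset_right) (hT.diff hS),
    hAS.measureReal_inter_eq_mul, hdiff]
  ring

end ProbabilityTheory

theorem stmt13_general {Ω : Type*} [MeasurableSpace Ω] (P : Measure Ω) [IsProbabilityMeasure P]
    (Γ Γ' W2 W3 W4 M Z : ℝ)
    (hΓ : 0 < Γ) (hΓΓ' : Γ ≤ Γ')
    (hW2 : 0 < W2) (hW3 : 0 < W3) (hW4 : 0 < W4) (hM : 0 < M)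
    (hne : W3 ≠ M * W2)
    (hZpos : 0 < Z)
    (γSR γSD H B : Ω → ℝ)
    (hmSR : Measurable γSR) (hmSD : Measurable γSD)
    (hmH : Measurable H) (hmB : Measurable B)
    (hindep : iIndepFun ![γSR, γSD, H, B] P)
    (hdSR : Measure.map γSR P = expMeasure W4)
    (hdSD : Measure.map γSD P = expMeasure W2)
    (hdH : Measure.map H P = expMeasure W3)
    (hdB : Measure.map B P = expMeasure Z) :
    (P ({ω | γSD ω < Γ'} ∩
        {ω | min (γSR ω) (min (B ω) M * H ω + γSD ω) < Γ})).toReal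
      = (1 - Real.exp (-W4 * Γ)) * (1 - Real.exp (-W2 * Γ'))
        + Real.exp (-W4 * Γ) *
          (Real.exp (-Z * M) * ((1 - Real.exp (-W2 * Γ))
              + W2 * (Real.exp (-(W3 / M) * Γ) - Real.exp (-W2 * Γ)) / (W3 / M - W2))
            + (1 - Real.exp (-Z * M)) * (1 - Real.exp (-W2 * Γ))
            + W2 * Z * ∫ x in (0:ℝ)..M,
                x * Real.exp (-Z * x) * (Real.exp (-W2 * Γ) - Real.exp (-W3 * Γ / x))
                  / (x * W2 - W3)) := by
  have hm : ∀ i, Measurable (![γSR, γSD, H, B] i) := fun i => by fin_cases i <;> assumption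
  set T : Ω → ℝ := fun ω => min (B ω) M * H ω + γSD ω
  have hmT : Measurable T := by fun_prop
  have hψ : Measurable fun v : ({1, 2, 3} : Finset (Fin 4)) → ℝ =>
      min (v ⟨3, by simp⟩) M * v ⟨2, by simp⟩ + v ⟨1, by simp⟩ := by fun_prop
  have hindep_SR_T : IndepFun γSR T P :=
    (hindep.indepFun_finset {0} {1, 2, 3} (by decide) hm).comp
      (measurable_pi_apply (⟨0, by simp⟩ : ({0} : Finset (Fin 4)))) hψ
  have hH_SD : IndepFun H γSD P := hindep.indepFun (by decide : (2 : Fin 4) ≠ 1)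
  have hB_HSD : IndepFun B (fun ω => (H ω, γSD ω)) P :=
    (hindep.indepFun_prodMk hm 2 1 3 (by decide) (by decide)).symm
  have hlaw_T : P.real (T ⁻¹' Iio Γ) = ((expMeasure Z).prod ((expMeasure W3).prod
      (expMeasure W2))).real {p | min p.1 M * p.2.1 + p.2.2 < Γ} := by
    rw [← hdB, ← hdH, ← hdSD, ← hH_SD.map_prod_eq_prod_map_map hmH.aemeasurable hmSD.aemeasurable,
      ← hB_HSD.map_prod_eq_prod_map_map hmB.aemeasurable (by fun_prop),
      map_measureReal_apply (by fun_prop) (measurableSet_lt (by fun_prop) (by fun_prop))]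
    rfl
  have hT_le : T ⁻¹' Iio Γ ≤ᵐ[P] γSD ⁻¹' Iio Γ' := by
    filter_upwards [ae_of_ae_map hmB.aemeasurable (hdB ▸ ae_expMeasure_pos hZpos),
      ae_of_ae_map hmH.aemeasurable (hdH ▸ ae_expMeasure_pos hW3)] with ω hB hH (hω : T ω < Γ)
    have : 0 ≤ min (B ω) M * H ω := mul_nonneg (le_min hB.le hM.le) hH.le
    show γSD ω < Γ'
    simp only [T] at hω
    linarith
  have hlaw {X : Ω → ℝ} {r : ℝ} (hX : Measurable X) (hd : P.map X = expMeasure r) (hr : 0 < r)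
      {c : ℝ} (hc : 0 ≤ c) : P.real (X ⁻¹' Iio c) = 1 - exp (-r * c) := by
    rw [← map_measureReal_apply hX measurableSet_Iio, hd, expMeasure_real_Iio hr, if_pos hc]
  rw [← measureReal_def, show {ω | γSD ω < Γ'} ∩ {ω | min (γSR ω) (T ω) < Γ}
      = γSD ⁻¹' Iio Γ' ∩ (γSR ⁻¹' Iio Γ ∪ T ⁻¹' Iio Γ) by ext; simp,
    measureReal_inter_union_of_indepSet (hmSR measurableSet_Iio) (hmT measurableSet_Iio)
      ((indepFun_iff_indepSet_preimage hmSD hmSR).1 (hindep.indepFun (by decide : (1 : Fin 4) ≠ 0))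
        _ _ measurableSet_Iio measurableSet_Iio)
      ((indepFun_iff_indepSet_preimage hmSR hmT).1 hindep_SR_T _ _ measurableSet_Iio
        measurableSet_Iio) hT_le,
    hlaw hmSD hdSD hW2 (hΓ.le.trans hΓΓ'), hlaw hmSR hdSR hW4 hΓ.le, hlaw_T,
    measureReal_expMeasure_prod_min_mul_add_lt hZpos hW3 hW2 hM hΓ.le hne, hypoexpCDF]
  ring

/-- Outage probability of the HSU architecture with the incremental best-effort
policy in the stable-buffer case `φ = p λ₁ M > 1` (Eq. (20)).  Here `p = 1 - exp(-W₂Γ')`,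
`Z` is the stationary-buffer exponent, the relayed SNR is `min(B, M)·H`, and
`W₁ = W₃/M`. -/
theorem stmt13 {Ω : Type*} [MeasurableSpace Ω] (P : Measure Ω) [IsProbabilityMeasure P]
    (Γ Γ' W2 W3 W4 lam M Z : ℝ)
    (hΓ : 0 < Γ) (hΓΓ' : Γ ≤ Γ')
    (hW2 : 0 < W2) (hW3 : 0 < W3) (hW4 : 0 < W4) (hlam : 0 < lam) (hM : 0 < M)
    (hne : W3 ≠ M * W2)
    (hphi : 1 < (1 - Real.exp (-W2 * Γ')) * lam * M)
    (hZpos : 0 < Z)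
    (hZeq : Z = (1 - Real.exp (-W2 * Γ')) * lam * (1 - Real.exp (-Z * M)))
    (γSR γSD H B : Ω → ℝ)
    (hmSR : Measurable γSR) (hmSD : Measurable γSD)
    (hmH : Measurable H) (hmB : Measurable B)
    (hindep : iIndepFun ![γSR, γSD, H, B] P)
    (hdSR : Measure.map γSR P = expMeasure W4)
    (hdSD : Measure.map γSD P = expMeasure W2)
    (hdH : Measure.map H P = expMeasure W3)
    (hdB : Measure.map B P = expMeasure Z) :
    (P ({ω | γSD ω < Γ'} ∩
        {ω | min (γSR ω) (min (B ω) M * H ω + γSD ω) < Γ})).toReal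
      = (1 - Real.exp (-W4 * Γ)) * (1 - Real.exp (-W2 * Γ'))
        + Real.exp (-W4 * Γ) *
          (Real.exp (-Z * M) * ((1 - Real.exp (-W2 * Γ))
              + W2 * (Real.exp (-(W3 / M) * Γ) - Real.exp (-W2 * Γ)) / (W3 / M - W2))
            + (1 - Real.exp (-Z * M)) * (1 - Real.exp (-W2 * Γ))
            + W2 * Z * ∫ x in (0:ℝ)..M,
                x * Real.exp (-Z * x) * (Real.exp (-W2 * Γ) - Real.exp (-W3 * Γ / x))
                  / (x * W2 - W3)) :=
  stmt13_general P Γ Γ' W2 W3 W4 M Z hΓ hΓΓ' hW2 hW3 hW4 hM hne hZpos γSR γSD H B hmSR hmSD hmH hmB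
    hindep hdSR hdSD hdH hdB
end

section
/- Fix c₂, c₃, c₄ > 0, λ₁ > 0, Γ > 0 and φ > 1. For s > 0 define W₂(s) = c₂/s, W₄(s) = c₄/s, p(s) = 1 − e^{−W₂(s)Γ}, M(s) = φ/(λ₁ p(s)) and W₁(s) = c₃/M(s), and assume W₁(s) ≠ W₂(s) for all sufficiently large s. Define P(s) = (1 − e^{−W₄(s)Γ})(1 − e^{−W₂(s)Γ}) + e^{−W₄(s)Γ}·[ (1/φ)·( (1 − e^{−W₂(s)Γ}) + W₂(s)(e^{−W₁(s)Γ} − e^{−W₂(s)Γ})/(W₁(s) − W₂(s)) ) + (1 − 1/φ)·(1 − e^{−W₂(s)Γ}) ]. Then lim_{s→∞} s·P(s) = (1 − 1/φ)·c₂·Γ. -/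
open Real Filter

/-- Outage probability of the incremental on-off policy (Eq. (23) with
`Γ'_th = Γ_th = Γ` and `θ = 1/φ`), as a function of the link rates. -/
noncomputable def iofpOutage (Γ W1 W2 W4 φ : ℝ) : ℝ :=
  (1 - Real.exp (-W4 * Γ)) * (1 - Real.exp (-W2 * Γ))
    + Real.exp (-W4 * Γ) *
      ((1 / φ) * ((1 - Real.exp (-W2 * Γ))
          + W2 * (Real.exp (-W1 * Γ) - Real.exp (-W2 * Γ)) / (W1 - W2))
        + (1 - 1 / φ) * (1 - Real.exp (-W2 * Γ)))

/-- Probability that the direct link fails, `p(s) = 1 - exp(-W₂(s) Γ)` with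
`W₂(s) = c₂/s`. -/
noncomputable def pFail (c2 Γ : ℝ) (s : ℝ) : ℝ := 1 - Real.exp (-(c2 / s) * Γ)

/-- Energy drawn per relay transmission, `M(s) = φ/(λ₁ p(s))`, keeping the
stability parameter `φ` fixed. -/
noncomputable def Mfn (c2 lam Γ φ : ℝ) (s : ℝ) : ℝ := φ / (lam * pFail c2 Γ s)

open Topology

/-!
As `s → ∞` every rate `W₁, W₂, W₄` tends to `0`, since `W₁ = c₃ λ₁ p(s) / φ` and `p(s) → 0`.
Multiplying by `s`, the first-order expansions `s (1 - e^{-c₂Γ/s}) → c₂Γ` and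
`(e^{-W₁Γ} - e^{-W₂Γ}) / (W₁ - W₂) → -Γ` (a divided difference of `w ↦ e^{-wΓ}` at two points
tending to `0`) show that the relay branch contributes `(1/φ)(c₂Γ - c₂Γ) = 0`, while the
direct branch contributes `(1 - 1/φ) c₂Γ`.
-/

theorem HasStrictDerivAt.tendsto_sub_div_sub {𝕜 α : Type*} [NontriviallyNormedField 𝕜]
    {f : 𝕜 → 𝕜} {f' x : 𝕜} (hf : HasStrictDerivAt f f' x) {l : Filter α} {u v : α → 𝕜}
    (hu : Tendsto u l (𝓝 x)) (hv : Tendsto v l (𝓝 x)) (huv : ∀ᶠ a in l, u a ≠ v a) :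
    Tendsto (fun a => (f (u a) - f (v a)) / (u a - v a)) l (𝓝 f') := by
  have hlittle := (hasDerivAtFilter_iff_isLittleO.mp hf).comp_tendsto
    (nhds_prod_eq (x := x) (y := x) ▸ hu.prodMk hv)
  have hzero := hlittle.tendsto_div_nhds_zero.add_const f'
  rw [zero_add] at hzero
  refine hzero.congr' ?_
  filter_upwards [huv] with a ha
  have hne : u a - v a ≠ 0 := sub_ne_zero.mpr ha
  simp only [Function.comp_apply, smul_eq_mul]
  field_simp
  ring

theorem tendsto_exp_neg_div_mul_atTop (c Γ : ℝ) :
    Tendsto (fun s : ℝ => exp (-(c / s) * Γ)) atTop (𝓝 1) := by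
  have h : Tendsto (fun s : ℝ => -(c / s) * Γ) atTop (𝓝 0) := by
    simpa using (tendsto_const_nhds.div_atTop tendsto_id).neg.mul_const Γ
  simpa [Function.comp_def] using (continuous_exp.tendsto 0).comp h

theorem tendsto_mul_one_sub_exp_neg_div_mul_atTop (c Γ : ℝ) :
    Tendsto (fun s : ℝ => s * (1 - exp (-(c / s) * Γ))) atTop (𝓝 (c * Γ)) := by
  have hderiv : HasDerivAt (fun t : ℝ => 1 - exp (-(c * t) * Γ)) (c * Γ) 0 := by
    have := ((((hasDerivAt_id (0 : ℝ)).const_mul c).neg.mul_const Γ).exp).const_sub 1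
    simpa using this
  refine (hderiv.tendsto_slope_zero_right.comp tendsto_inv_atTop_nhdsGT_zero).congr fun s => ?_
  simp [div_eq_mul_inv]

theorem tendsto_pFail_atTop (c2 Γ : ℝ) : Tendsto (pFail c2 Γ) atTop (𝓝 0) := by
  have h := (tendsto_const_nhds (x := (1 : ℝ))).sub (tendsto_exp_neg_div_mul_atTop c2 Γ)
  rwa [sub_self] at h

theorem div_Mfn_eq (c2 c3 lam Γ φ s : ℝ) :
    c3 / Mfn c2 lam Γ φ s = c3 * lam * pFail c2 Γ s / φ := by
  rw [Mfn, div_div_eq_mul_div, mul_assoc]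

theorem tendsto_div_Mfn_atTop (c2 c3 lam Γ φ : ℝ) :
    Tendsto (fun s => c3 / Mfn c2 lam Γ φ s) atTop (𝓝 0) := by
  simp_rw [div_Mfn_eq]
  simpa using ((tendsto_pFail_atTop c2 Γ).const_mul (c3 * lam)).div_const φ

theorem mul_iofpOutage (s Γ W1 W2 W4 φ : ℝ) :
    s * iofpOutage Γ W1 W2 W4 φ =
      (1 - exp (-W4 * Γ)) * (s * (1 - exp (-W2 * Γ)))
        + exp (-W4 * Γ) *
          ((1 / φ) * (s * (1 - exp (-W2 * Γ))
              + s * W2 * ((exp (-W1 * Γ) - exp (-W2 * Γ)) / (W1 - W2)))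
            + (1 - 1 / φ) * (s * (1 - exp (-W2 * Γ)))) := by
  rw [iofpOutage]
  ring

theorem stmt17_general (c2 c3 c4 lam Γ φ : ℝ)
    (hne : ∀ᶠ s in atTop, c3 / Mfn c2 lam Γ φ s ≠ c2 / s) :
    Tendsto (fun s => s * iofpOutage Γ (c3 / Mfn c2 lam Γ φ s) (c2 / s) (c4 / s) φ)
      atTop (nhds ((1 - 1 / φ) * c2 * Γ)) := by
  have hS := tendsto_mul_one_sub_exp_neg_div_mul_atTop c2 Γ
  have hE := tendsto_exp_neg_div_mul_atTop c4 Γ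
  have hW2 : Tendsto (fun s : ℝ => c2 / s) atTop (𝓝 0) := tendsto_const_nhds.div_atTop tendsto_id
  have hQ : Tendsto (fun s => (exp (-(c3 / Mfn c2 lam Γ φ s) * Γ) - exp (-(c2 / s) * Γ))
      / (c3 / Mfn c2 lam Γ φ s - c2 / s)) atTop (𝓝 (-Γ)) := by
    have hexp : HasStrictDerivAt (fun w : ℝ => exp (-w * Γ)) (-Γ) 0 := by
      simpa using ((hasStrictDerivAt_id (0 : ℝ)).neg.mul_const Γ).exp
    exact hexp.tendsto_sub_div_sub (tendsto_div_Mfn_atTop c2 c3 lam Γ φ) hW2 hne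
  have hlim := (((tendsto_const_nhds (x := (1 : ℝ))).sub hE).mul hS).add
    (hE.mul (((hS.add (hQ.const_mul c2)).const_mul (1 / φ)).add (hS.const_mul (1 - 1 / φ))))
  rw [show (1 - 1) * (c2 * Γ) + 1 * ((1 / φ) * (c2 * Γ + c2 * -Γ) + (1 - 1 / φ) * (c2 * Γ))
      = (1 - 1 / φ) * c2 * Γ by ring] at hlim
  refine hlim.congr' ?_
  filter_upwards [eventually_ne_atTop 0] with s hs
  rw [mul_iofpOutage, mul_div_cancel₀ c2 hs]

/-- Diversity analysis of the IOFP: with `W₂(s) = c₂/s`, `W₄(s) = c₄/s`,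
`M(s) = φ/(λ₁ p(s))` and `W₁(s) = c₃/M(s)`, the outage probability `P(s)`
satisfies `s · P(s) → (1 - 1/φ) c₂ Γ`, i.e. diversity order one. -/
theorem stmt17 (c2 c3 c4 lam Γ φ : ℝ)
    (hc2 : 0 < c2) (hc3 : 0 < c3) (hc4 : 0 < c4)
    (hlam : 0 < lam) (hΓ : 0 < Γ) (hφ : 1 < φ)
    (hne : ∀ᶠ s in atTop, c3 / Mfn c2 lam Γ φ s ≠ c2 / s) :
    Tendsto (fun s => s * iofpOutage Γ (c3 / Mfn c2 lam Γ φ s) (c2 / s) (c4 / s) φ)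
      atTop (nhds ((1 - 1 / φ) * c2 * Γ)) :=
  stmt17_general c2 c3 c4 lam Γ φ hne
end

section
/- Fix c₂, c₃, c₄ > 0, λ₁ > 0, Γ > 0 and φ > 1. For s > 0 define W₂(s) = c₂/s, W₄(s) = c₄/s, p(s) = 1 − e^{−W₂(s)Γ}, M(s) = φ/(λ₁ p(s)) and W₁(s) = c₃/M(s), assume W₁(s) ≠ W₂(s) and c₃ ≠ M(s)W₂(s) for all sufficiently large s, and let Z(s) > 0 be the unique positive solution of z = p(s)·λ₁·(1 − e^{−z·M(s)}). Define P(s) = (1 − e^{−W₄(s)Γ})(1 − e^{−W₂(s)Γ}) + e^{−W₄(s)Γ}·[ e^{−Z(s)M(s)}( (1 − e^{−W₂(s)Γ}) + W₂(s)(e^{−W₁(s)Γ} − e^{−W₂(s)Γ})/(W₁(s) − W₂(s)) ) + (1 − e^{−Z(s)M(s)})(1 − e^{−W₂(s)Γ}) + W₂(s)·Z(s)·∫₀^{M(s)} x e^{−Z(s)x}(e^{−W₂(s)Γ} − e^{−c₃Γ/x})/(x W₂(s) − c₃) dx ]. Then lim_{s→∞} (log P(s))/(log s) = −2. -/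
/-!
Write `e t = exp (-t)` and `G a b = 1 - e a + a * slope e a b`, with `a = W₂Γ`. On `x > 0` the
integrand of the outage formula absorbs the term `(1 - e^{-ZM})(1 - e^{-W₂Γ})`, and
`P = (1 - e^{-W₄Γ})(1 - e^{-W₂Γ}) + e^{-W₄Γ} (e^{-ZM} G(a, W₁Γ) + Z ∫₀^M e^{-Zx} G(a, c₃Γ/x) dx)`.
As `0 ≤ e'' ≤ 1` on `[0, ∞)`, `0 ≤ G a b ≤ a`, and `G a b ≤ a b / 2` for `b ≠ a`. So `P` is at least
the direct-link term `≍ s⁻²`, and at most `W₂Γ (W₄Γ + W₁Γ/2 + Z (1 + c₃Γ/2 · log M))`; since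
`W₁, W₂, W₄, Z = O(s⁻¹)` and `M = O(s)` this is `O(log s / s²)`, whence `log P / log s → -2`.
-/

open Real Filter MeasureTheory

/-- Outage probability of the incremental best-effort policy (Eq. (20) with
`Γ'_th = Γ_th = Γ`), as a function of the link rates, the buffer exponent `Z`,
the drawn energy `M`, and `c₃ = σ²d_RD^α/2`. -/
noncomputable def ibepOutage (Γ W1 W2 W4 Z M c3 : ℝ) : ℝ :=
  (1 - Real.exp (-W4 * Γ)) * (1 - Real.exp (-W2 * Γ))
    + Real.exp (-W4 * Γ) *
      (Real.exp (-Z * M) * ((1 - Real.exp (-W2 * Γ))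
          + W2 * (Real.exp (-W1 * Γ) - Real.exp (-W2 * Γ)) / (W1 - W2))
        + (1 - Real.exp (-Z * M)) * (1 - Real.exp (-W2 * Γ))
        + W2 * Z * ∫ x in (0:ℝ)..M,
            x * Real.exp (-Z * x) * (Real.exp (-W2 * Γ) - Real.exp (-c3 * Γ / x))
              / (x * W2 - c3))

open Set Topology

lemma slope_exp_neg_nonpos (a b : ℝ) : slope (fun t => exp (-t)) a b ≤ 0 :=
  AntitoneOn.slope_nonpos (fun _ _ _ _ hxy => exp_le_exp.2 (neg_le_neg hxy))
    (mem_univ a) (mem_univ b)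

lemma convexOn_exp_neg : ConvexOn ℝ univ (fun t : ℝ => exp (-t)) :=
  convexOn_exp.comp_linearMap (-LinearMap.id)

lemma convexOn_sq_div_two_sub_exp_neg :
    ConvexOn ℝ (Ici 0) (fun t : ℝ => t ^ 2 / 2 - exp (-t)) := by
  refine convexOn_of_hasDerivWithinAt2_nonneg (convex_Ici 0) (by fun_prop)
    (f' := fun t => t + exp (-t)) (f'' := fun t => 1 - exp (-t)) (fun x _ => ?_) (fun x _ => ?_)
    (fun x hx => ?_)
  · exact ((((hasDerivAt_pow 2 x).div_const 2).sub (hasDerivAt_neg x).exp).congr_deriv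
      (by simp)).hasDerivWithinAt
  · exact (((hasDerivAt_id x).add (hasDerivAt_neg x).exp).congr_deriv (by ring)).hasDerivWithinAt
  · rw [interior_Ici] at hx
    simpa using (hx : 0 < x).le

lemma slope_exp_neg_zero_le {a b : ℝ} (ha : a ≠ 0) (hb : 0 ≤ b) :
    slope (fun t => exp (-t)) a 0 ≤ slope (fun t => exp (-t)) a b := by
  rcases eq_or_ne b a with rfl | hba
  · simpa using slope_exp_neg_nonpos b 0
  · exact convexOn_exp_neg.slope_mono (mem_univ a) ⟨mem_univ 0, ha.symm⟩ ⟨mem_univ b, hba⟩ hb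

lemma slope_exp_neg_sub_slope_exp_neg_zero_le {a b : ℝ} (ha : 0 < a) (hb : 0 ≤ b) (hba : b ≠ a) :
    slope (fun t => exp (-t)) a b - slope (fun t => exp (-t)) a 0 ≤ b / 2 := by
  have hq := convexOn_sq_div_two_sub_exp_neg.slope_mono (mem_Ici.2 ha.le)
    ⟨mem_Ici.2 le_rfl, ha.ne⟩ ⟨mem_Ici.2 hb, hba⟩ hb
  have hslope : ∀ x ≠ a, slope (fun t : ℝ => t ^ 2 / 2 - exp (-t)) a x
      = (a + x) / 2 - slope (fun t => exp (-t)) a x := by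
    intro x hx
    have : x - a ≠ 0 := sub_ne_zero.2 hx
    simp only [slope_def_field]
    field_simp
    ring
  rw [hslope 0 ha.ne, hslope b hba] at hq
  linarith

/-- `expChordGap a b = a * (slope e a b - slope e a 0)` with `e t = exp (-t)`, so convexity of
`e` and of `t ^ 2 / 2 - e t` on `[0, ∞)` puts it between `0` and `a * b / 2`. -/
noncomputable def expChordGap (a b : ℝ) : ℝ := 1 - exp (-a) + a * slope (fun t => exp (-t)) a b

lemma expChordGap_eq_mul_sub {a : ℝ} (ha : a ≠ 0) (b : ℝ) :
    expChordGap a b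
      = a * (slope (fun t => exp (-t)) a b - slope (fun t => exp (-t)) a 0) := by
  simp only [expChordGap, slope_def_field, neg_zero, exp_zero]
  field_simp
  ring

lemma expChordGap_nonneg {a b : ℝ} (ha : 0 < a) (hb : 0 ≤ b) : 0 ≤ expChordGap a b := by
  rw [expChordGap_eq_mul_sub ha.ne']
  exact mul_nonneg ha.le (sub_nonneg.2 (slope_exp_neg_zero_le ha.ne' hb))

lemma expChordGap_le_self {a : ℝ} (ha : 0 ≤ a) (b : ℝ) : expChordGap a b ≤ a := by
  have h1 : 1 - exp (-a) ≤ a := by linarith [one_sub_le_exp_neg a]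
  have h2 := mul_nonpos_of_nonneg_of_nonpos ha (slope_exp_neg_nonpos a b)
  rw [expChordGap]
  linarith

lemma expChordGap_le_mul_div_two {a b : ℝ} (ha : 0 < a) (hb : 0 ≤ b) (hba : b ≠ a) :
    expChordGap a b ≤ a * b / 2 := by
  rw [expChordGap_eq_mul_sub ha.ne', mul_div_assoc]
  exact mul_le_mul_of_nonneg_left (slope_exp_neg_sub_slope_exp_neg_zero_le ha hb hba) ha.le

lemma measurable_exp_mul_expChordGap (a c Z : ℝ) :
    Measurable fun x => exp (-Z * x) * expChordGap a (c / x) := by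
  unfold expChordGap slope
  fun_prop

lemma exp_mul_expChordGap_le {a c Z x : ℝ} (ha : 0 < a) (hc : 0 ≤ c) (hZ : 0 ≤ Z)
    (hx : 0 ≤ x) : exp (-Z * x) * expChordGap a (c / x) ≤ expChordGap a (c / x) :=
  mul_le_of_le_one_left (expChordGap_nonneg ha (div_nonneg hc hx))
    (exp_le_one_iff.2 (by nlinarith))

lemma exp_mul_expChordGap_mem_Icc {a c Z x : ℝ} (ha : 0 < a) (hc : 0 ≤ c) (hZ : 0 ≤ Z)
    (hx : 0 ≤ x) : exp (-Z * x) * expChordGap a (c / x) ∈ Icc 0 a :=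
  ⟨mul_nonneg (exp_pos _).le (expChordGap_nonneg ha (div_nonneg hc hx)),
    (exp_mul_expChordGap_le ha hc hZ hx).trans (expChordGap_le_self ha.le _)⟩

lemma intervalIntegrable_exp_mul_expChordGap {a c Z M : ℝ} (ha : 0 < a) (hc : 0 ≤ c)
    (hZ : 0 ≤ Z) (hM : 0 ≤ M) :
    IntervalIntegrable (fun x => exp (-Z * x) * expChordGap a (c / x)) volume 0 M := by
  rw [intervalIntegrable_iff_integrableOn_Ioc_of_le hM]
  refine Integrable.mono' (integrableOn_const measure_Ioc_lt_top.ne (C := a))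
    (measurable_exp_mul_expChordGap a c Z).aestronglyMeasurable
    ((ae_restrict_iff' measurableSet_Ioc).2 (ae_of_all _ fun x hx => ?_))
  obtain ⟨h0, h1⟩ := exp_mul_expChordGap_mem_Icc ha hc hZ hx.1.le
  rwa [norm_of_nonneg h0]

lemma integral_exp_mul_expChordGap_le {a c Z M : ℝ} (ha : 0 < a) (hc : 0 ≤ c) (hZ : 0 ≤ Z)
    (hM : 1 ≤ M) :
    ∫ x in (0 : ℝ)..M, exp (-Z * x) * expChordGap a (c / x) ≤ a * (1 + c / 2 * log M) := by
  set g := fun x => exp (-Z * x) * expChordGap a (c / x)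
  have hg := intervalIntegrable_exp_mul_expChordGap ha hc hZ (zero_le_one.trans hM)
  have hg01 : IntervalIntegrable g volume 0 1 :=
    hg.mono_set (by
      rw [uIcc_of_le zero_le_one, uIcc_of_le (zero_le_one.trans hM)]
      exact Icc_subset_Icc_right hM)
  have hg1M : IntervalIntegrable g volume 1 M :=
    hg.mono_set (by
      rw [uIcc_of_le hM, uIcc_of_le (zero_le_one.trans hM)]
      exact Icc_subset_Icc_left zero_le_one)
  have hI01 : ∫ x in (0 : ℝ)..1, g x ≤ a := by
    simpa using intervalIntegral.integral_mono_on zero_le_one hg01 intervalIntegrable_const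
      fun x hx => (exp_mul_expChordGap_mem_Icc ha hc hZ hx.1).2
  -- the pointwise bound fails only at `x = c / a`, where the chord degenerates
  have hpt : g ≤ᵐ[volume.restrict (Icc 1 M)] fun x => a * c / 2 * x⁻¹ := by
    refine (ae_restrict_iff' measurableSet_Icc).2 ?_
    filter_upwards [(countable_singleton (c / a)).ae_notMem volume] with x hxa hx
    have hx0 : 0 < x := zero_lt_one.trans_le hx.1
    have hcx : c / x ≠ a := fun h =>
      hxa (mem_singleton_iff.2 ((eq_div_iff ha.ne').2 (by rw [← h]; field_simp)))
    calc g x ≤ expChordGap a (c / x) := exp_mul_expChordGap_le ha hc hZ hx0.le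
      _ ≤ a * (c / x) / 2 := expChordGap_le_mul_div_two ha (div_nonneg hc hx0.le) hcx
      _ = a * c / 2 * x⁻¹ := by ring
  have hI1M : ∫ x in (1 : ℝ)..M, g x ≤ a * c / 2 * log M := by
    have hinv : IntervalIntegrable (fun x : ℝ => a * c / 2 * x⁻¹) volume 1 M :=
      (intervalIntegrable_inv_iff.2 (Or.inr (by simp [uIcc_of_le hM]))).const_mul _
    refine (intervalIntegral.integral_mono_ae_restrict hM hg1M hinv hpt).trans_eq ?_
    rw [intervalIntegral.integral_const_mul,
      integral_inv_of_pos zero_lt_one (zero_lt_one.trans_le hM), div_one]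
  rw [← intervalIntegral.integral_add_adjacent_intervals hg01 hg1M]
  nlinarith

lemma integral_exp_neg_mul {Z : ℝ} (hZ : Z ≠ 0) (M : ℝ) :
    ∫ x in (0 : ℝ)..M, exp (-Z * x) = (1 - exp (-Z * M)) / Z := by
  rw [intervalIntegral.integral_comp_mul_left (fun x => exp x) (neg_ne_zero.2 hZ), integral_exp]
  simp only [inv_neg, neg_mul, mul_zero, exp_zero, smul_eq_mul]
  field_simp
  ring

lemma expChordGap_mul_mul {Γ : ℝ} (hΓ : Γ ≠ 0) (W u : ℝ) :
    expChordGap (W * Γ) (u * Γ)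
      = 1 - exp (-W * Γ) + W * (exp (-u * Γ) - exp (-W * Γ)) / (u - W) := by
  rcases eq_or_ne u W with rfl | huW
  · simp [expChordGap]
  · have : u - W ≠ 0 := sub_ne_zero.2 huW
    simp only [expChordGap, slope_def_field, neg_mul]
    field_simp

lemma mul_ibepOutage_integrand_eq {Γ x : ℝ} (hΓ : Γ ≠ 0) (hx : x ≠ 0) (W Z c : ℝ) :
    W * (x * exp (-Z * x) * (exp (-W * Γ) - exp (-c * Γ / x)) / (x * W - c))
      = exp (-Z * x) * (expChordGap (W * Γ) (c * Γ / x) - (1 - exp (-W * Γ))) := by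
  rw [show c * Γ / x = c / x * Γ by ring, show -c * Γ / x = -(c / x) * Γ by ring,
    expChordGap_mul_mul hΓ]
  rcases eq_or_ne (x * W) c with h | h
  · have : c / x = W := by rw [← h]; field_simp
    simp [h, this]
  · rw [show c / x - W = -(x * W - c) / x by field_simp; ring, div_div_eq_mul_div, div_neg]
    ring

lemma ibepOutage_eq {Γ W1 W2 W4 Z M c3 : ℝ} (hΓ : 0 < Γ) (hW2 : 0 < W2) (hc3 : 0 ≤ c3)
    (hZ : 0 < Z) (hM : 0 ≤ M) :
    ibepOutage Γ W1 W2 W4 Z M c3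
      = (1 - exp (-W4 * Γ)) * (1 - exp (-W2 * Γ)) + exp (-W4 * Γ) *
        (exp (-Z * M) * expChordGap (W2 * Γ) (W1 * Γ)
          + Z * ∫ x in (0 : ℝ)..M, exp (-Z * x) * expChordGap (W2 * Γ) (c3 * Γ / x)) := by
  have hg := intervalIntegrable_exp_mul_expChordGap (mul_pos hW2 hΓ) (mul_nonneg hc3 hΓ.le)
    hZ.le hM
  have hint : W2 * ∫ x in (0 : ℝ)..M,
        x * exp (-Z * x) * (exp (-W2 * Γ) - exp (-c3 * Γ / x)) / (x * W2 - c3)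
      = (∫ x in (0 : ℝ)..M, exp (-Z * x) * expChordGap (W2 * Γ) (c3 * Γ / x))
        - (1 - exp (-Z * M)) / Z * (1 - exp (-W2 * Γ)) := by
    rw [← intervalIntegral.integral_const_mul, ← integral_exp_neg_mul hZ.ne',
      ← intervalIntegral.integral_mul_const, ← intervalIntegral.integral_sub hg
        ((by fun_prop : Continuous fun x => exp (-Z * x) * (1 - exp (-W2 * Γ))).intervalIntegrable
          0 M)]
    refine intervalIntegral.integral_congr_ae (ae_of_all _ fun x hx => ?_)
    rw [uIoc_of_le hM] at hx
    rw [mul_ibepOutage_integrand_eq hΓ.ne' hx.1.ne']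
    ring
  rw [ibepOutage, ← expChordGap_mul_mul hΓ.ne', mul_assoc W2 Z, mul_left_comm, hint]
  field_simp
  ring

lemma exp_mul_expChordGap_add_mul_integral_nonneg {a b c Z M : ℝ} (ha : 0 < a) (hb : 0 ≤ b)
    (hc : 0 ≤ c) (hZ : 0 ≤ Z) (hM : 0 ≤ M) :
    0 ≤ exp (-Z * M) * expChordGap a b
      + Z * ∫ x in (0 : ℝ)..M, exp (-Z * x) * expChordGap a (c / x) :=
  add_nonneg (mul_nonneg (exp_pos _).le (expChordGap_nonneg ha hb))
    (mul_nonneg hZ (intervalIntegral.integral_nonneg hM fun _ hx =>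
      (exp_mul_expChordGap_mem_Icc ha hc hZ hx.1).1))

lemma mul_le_ibepOutage {Γ W1 W2 W4 Z M c3 : ℝ} (hΓ : 0 < Γ) (hW1 : 0 ≤ W1) (hW2 : 0 < W2)
    (hc3 : 0 ≤ c3) (hZ : 0 < Z) (hM : 0 ≤ M) :
    (1 - exp (-W4 * Γ)) * (1 - exp (-W2 * Γ)) ≤ ibepOutage Γ W1 W2 W4 Z M c3 := by
  rw [ibepOutage_eq hΓ hW2 hc3 hZ hM, le_add_iff_nonneg_right]
  exact mul_nonneg (exp_pos _).le (exp_mul_expChordGap_add_mul_integral_nonneg (mul_pos hW2 hΓ)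
    (mul_nonneg hW1 hΓ.le) (mul_nonneg hc3 hΓ.le) hZ.le hM)

lemma ibepOutage_le {Γ W1 W2 W4 Z M c3 : ℝ} (hΓ : 0 < Γ) (hW1 : 0 ≤ W1) (hW2 : 0 < W2)
    (hW4 : 0 ≤ W4) (hc3 : 0 ≤ c3) (hZ : 0 < Z) (hM : 1 ≤ M) (h12 : W1 ≠ W2) :
    ibepOutage Γ W1 W2 W4 Z M c3
      ≤ W2 * Γ * (W4 * Γ + W1 * Γ / 2 + Z * (1 + c3 * Γ / 2 * log M)) := by
  have ha : 0 < W2 * Γ := mul_pos hW2 hΓ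
  have hb : 0 ≤ W1 * Γ := mul_nonneg hW1 hΓ.le
  have hc : 0 ≤ c3 * Γ := mul_nonneg hc3 hΓ.le
  have hB := exp_mul_expChordGap_add_mul_integral_nonneg ha hb hc hZ.le (zero_le_one.trans hM)
  have hdirect : (1 - exp (-W4 * Γ)) * (1 - exp (-W2 * Γ)) ≤ W4 * Γ * (W2 * Γ) := by
    simp only [neg_mul]
    refine mul_le_mul ?_ ?_ (sub_nonneg.2 (exp_le_one_iff.2 (neg_nonpos.2 ha.le))) (by positivity)
    · linarith [one_sub_le_exp_neg (W4 * Γ)]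
    · linarith [one_sub_le_exp_neg (W2 * Γ)]
  have hrelay : exp (-Z * M) * expChordGap (W2 * Γ) (W1 * Γ) ≤ W2 * Γ * (W1 * Γ) / 2 :=
    (mul_le_of_le_one_left (expChordGap_nonneg ha hb) (exp_le_one_iff.2 (by nlinarith))).trans
      (expChordGap_le_mul_div_two ha hb (fun h => h12 (mul_right_cancel₀ hΓ.ne' h)))
  have hbuffer := mul_le_mul_of_nonneg_left
    (integral_exp_mul_expChordGap_le ha hc hZ.le hM) hZ.le
  have hW4exp : exp (-W4 * Γ) ≤ 1 := exp_le_one_iff.2 (by nlinarith)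
  rw [ibepOutage_eq hΓ hW2 hc3 hZ (zero_le_one.trans hM)]
  nlinarith [mul_le_of_le_one_left hB hW4exp]

lemma div_two_le_one_sub_exp_neg {t : ℝ} (h0 : 0 ≤ t) (h1 : t ≤ 1) : t / 2 ≤ 1 - exp (-t) := by
  have h : exp (-t) ≤ 1 / (1 + t) := by
    rw [exp_neg, inv_eq_one_div]
    exact one_div_le_one_div_of_le (by linarith) (by linarith [add_one_le_exp t])
  have : 1 / (1 + t) ≤ 1 - t / 2 := by
    rw [div_le_iff₀ (by linarith)]
    nlinarith
  linarith

lemma le_of_eq_mul_one_sub_exp {z q y : ℝ} (hq : 0 ≤ q) (h : z = q * (1 - exp y)) : z ≤ q := by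
  rw [h]
  exact mul_le_of_le_one_right hq (by linarith [exp_pos y])

lemma tendsto_log_div_log_of_le_mul_log {g : ℝ → ℝ} {C K : ℝ} (hC : 0 < C) (hK : 0 < K)
    (hlow : ∀ᶠ s in atTop, C ≤ g s) (hup : ∀ᶠ s in atTop, g s ≤ K * log s) :
    Tendsto (fun s => log (g s) / log s) atTop (𝓝 0) := by
  have hinv : Tendsto (fun s => (log s)⁻¹) atTop (𝓝 0) :=
    tendsto_inv_atTop_zero.comp tendsto_log_atTop
  have hloglog : Tendsto (fun s => log (log s) / log s) atTop (𝓝 0) :=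
    (isLittleO_log_id_atTop.comp_tendsto tendsto_log_atTop).tendsto_div_nhds_zero
  refine tendsto_of_tendsto_of_tendsto_of_le_of_le' (by simpa using hinv.const_mul (log C))
    (by simpa using (hinv.const_mul (log K)).add hloglog) ?_ ?_ <;>
    filter_upwards [hlow, hup, eventually_gt_atTop 1] with s hCg hgK hs <;>
    have hl := log_pos hs
  · rw [← div_eq_mul_inv]
    exact div_le_div_of_nonneg_right (log_le_log hC hCg) hl.le
  · rw [← div_eq_mul_inv, ← add_div, ← log_mul hK.ne' hl.ne']
    exact div_le_div_of_nonneg_right (log_le_log (hC.trans_le hCg) hgK) hl.le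

lemma tendsto_log_div_log_of_le_of_le (d : ℕ) {f : ℝ → ℝ} {C K : ℝ} (hC : 0 < C) (hK : 0 < K)
    (hlow : ∀ᶠ s in atTop, C / s ^ d ≤ f s) (hup : ∀ᶠ s in atTop, f s ≤ K * log s / s ^ d) :
    Tendsto (fun s => log (f s) / log s) atTop (𝓝 (-(d : ℝ))) := by
  have h := tendsto_log_div_log_of_le_mul_log (g := fun s => f s * s ^ d) hC hK
    (by filter_upwards [hlow, eventually_gt_atTop 0] with s h hs
        rwa [div_le_iff₀ (by positivity)] at h)
    (by filter_upwards [hup, eventually_gt_atTop 0] with s h hs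
        rwa [le_div_iff₀ (by positivity)] at h)
  have h' : Tendsto (fun s => log (f s * s ^ d) / log s - d) atTop (𝓝 (-(d : ℝ))) := by
    simpa using h.sub_const (d : ℝ)
  refine h'.congr' ?_
  filter_upwards [hlow, eventually_gt_atTop 1] with s h hs
  have hf : 0 < f s := lt_of_lt_of_le (by positivity) h
  rw [log_mul hf.ne' (by positivity), log_pow]
  field_simp [(log_pos hs).ne']
  ring

section Asymptotics

variable {c2 lam Γ φ s : ℝ}

lemma pFail_le : pFail c2 Γ s ≤ c2 * Γ / s := by
  have := one_sub_le_exp_neg (c2 / s * Γ)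
  rw [pFail, neg_mul, ← div_mul_eq_mul_div]
  linarith

lemma div_two_le_pFail (hc2 : 0 ≤ c2) (hΓ : 0 ≤ Γ) (hs : 0 < s) (hsc : c2 * Γ ≤ s) :
    c2 * Γ / (2 * s) ≤ pFail c2 Γ s := by
  have := div_two_le_one_sub_exp_neg (t := c2 / s * Γ) (by positivity)
    (by rwa [div_mul_eq_mul_div, div_le_one hs])
  rw [pFail, neg_mul]
  convert this using 1
  field_simp

lemma pFail_pos (hc2 : 0 < c2) (hΓ : 0 < Γ) (hs : 0 < s) : 0 < pFail c2 Γ s := by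
  rw [pFail, sub_pos, exp_lt_one_iff, neg_mul, neg_lt_zero]
  positivity

lemma div_le_Mfn (hc2 : 0 < c2) (hlam : 0 < lam) (hΓ : 0 < Γ) (hφ : 0 ≤ φ) (hs : 0 < s) :
    φ * s / (lam * c2 * Γ) ≤ Mfn c2 lam Γ φ s := by
  have hp := pFail_pos hc2 hΓ hs
  calc φ * s / (lam * c2 * Γ) = φ / (lam * (c2 * Γ / s)) := by field_simp
    _ ≤ φ / (lam * pFail c2 Γ s) := by gcongr; exact pFail_le

lemma Mfn_le (hc2 : 0 < c2) (hlam : 0 < lam) (hΓ : 0 < Γ) (hφ : 0 ≤ φ) (hs : 0 < s)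
    (hsc : c2 * Γ ≤ s) : Mfn c2 lam Γ φ s ≤ 2 * φ * s / (lam * c2 * Γ) := by
  calc Mfn c2 lam Γ φ s ≤ φ / (lam * (c2 * Γ / (2 * s))) := by
        unfold Mfn; gcongr; exact div_two_le_pFail hc2.le hΓ.le hs hsc
    _ = 2 * φ * s / (lam * c2 * Γ) := by field_simp

lemma eventually_div_sq_le_ibepOutage {c3 c4 : ℝ} {Z : ℝ → ℝ} (hc2 : 0 < c2) (hc3 : 0 ≤ c3)
    (hc4 : 0 < c4) (hlam : 0 < lam) (hΓ : 0 < Γ) (hφ : 0 ≤ φ) (hZ : ∀ s, 0 < s → 0 < Z s) :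
    ∀ᶠ s in atTop, c2 * c4 * Γ ^ 2 / 4 / s ^ 2 ≤ ibepOutage Γ (c3 / Mfn c2 lam Γ φ s)
      (c2 / s) (c4 / s) (Z s) (Mfn c2 lam Γ φ s) c3 := by
  filter_upwards [eventually_gt_atTop 0, eventually_ge_atTop (c2 * Γ),
    eventually_ge_atTop (c4 * Γ)] with s hs hs2 hs4
  have hM : 0 ≤ Mfn c2 lam Γ φ s := (by positivity : (0 : ℝ) ≤ φ * s / (lam * c2 * Γ)).trans
    (div_le_Mfn hc2 hlam hΓ hφ hs)
  refine le_trans ?_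
    (mul_le_ibepOutage hΓ (div_nonneg hc3 hM) (div_pos hc2 hs) hc3 (hZ s hs) hM)
  have h4 := div_two_le_one_sub_exp_neg (t := c4 / s * Γ) (by positivity)
    (by rwa [div_mul_eq_mul_div, div_le_one hs])
  have h2 := div_two_le_one_sub_exp_neg (t := c2 / s * Γ) (by positivity)
    (by rwa [div_mul_eq_mul_div, div_le_one hs])
  rw [neg_mul, neg_mul]
  calc c2 * c4 * Γ ^ 2 / 4 / s ^ 2 = c4 / s * Γ / 2 * (c2 / s * Γ / 2) := by field_simp; ring
    _ ≤ _ := mul_le_mul h4 h2 (by positivity) ((by positivity : (0 : ℝ) ≤ c4 / s * Γ / 2).trans h4)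

lemma eventually_ibepOutage_le {c3 c4 : ℝ} {Z : ℝ → ℝ} (hc2 : 0 < c2) (hc3 : 0 ≤ c3)
    (hc4 : 0 < c4) (hlam : 0 < lam) (hΓ : 0 < Γ) (hφ : 0 < φ)
    (hne : ∀ᶠ s in atTop, c3 / Mfn c2 lam Γ φ s ≠ c2 / s)
    (hZ : ∀ s, 0 < s → 0 < Z s ∧
      Z s = pFail c2 Γ s * lam * (1 - exp (-(Z s) * Mfn c2 lam Γ φ s))) :
    ∃ K, 0 < K ∧ ∀ᶠ s in atTop, ibepOutage Γ (c3 / Mfn c2 lam Γ φ s)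
      (c2 / s) (c4 / s) (Z s) (Mfn c2 lam Γ φ s) c3 ≤ K * log s / s ^ 2 := by
  refine ⟨c2 * Γ * (c4 * Γ + c3 * lam * c2 * Γ ^ 2 / (2 * φ) + lam * c2 * Γ * (1 + c3 * Γ)),
    by positivity, ?_⟩
  filter_upwards [hne, eventually_ge_atTop (c2 * Γ), eventually_ge_atTop (lam * c2 * Γ / φ),
    eventually_ge_atTop (2 * φ / (lam * c2 * Γ)), eventually_ge_atTop (exp 1)]
    with s hs12 hsc hsM1 hsM2 hse
  have hs : 0 < s := (exp_pos 1).trans_le hse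
  have hlog : 1 ≤ log s := (le_log_iff_exp_le hs).2 hse
  set M := Mfn c2 lam Γ φ s
  have hMlow := div_le_Mfn hc2 hlam hΓ hφ.le hs
  have hM1 : 1 ≤ M := by
    refine le_trans ?_ hMlow
    rwa [le_div_iff₀ (by positivity), one_mul, ← div_le_iff₀' hφ]
  have hlogM : log M ≤ 2 * log s := by
    have hMs : M ≤ s ^ 2 := calc
      M ≤ 2 * φ / (lam * c2 * Γ) * s := by
        simpa [mul_div_right_comm] using Mfn_le hc2 hlam hΓ hφ.le hs hsc
      _ ≤ s ^ 2 := by rw [sq]; gcongr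
    simpa using log_le_log (by positivity) hMs
  have hW1 : c3 / M * Γ / 2 ≤ c3 * lam * c2 * Γ ^ 2 / (2 * φ) / s := calc
    c3 / M * Γ / 2 ≤ c3 / (φ * s / (lam * c2 * Γ)) * Γ / 2 := by gcongr
    _ = c3 * lam * c2 * Γ ^ 2 / (2 * φ) / s := by field_simp
  have hZs : Z s ≤ lam * c2 * Γ / s := calc
    Z s ≤ pFail c2 Γ s * lam :=
      le_of_eq_mul_one_sub_exp (by positivity [pFail_pos hc2 hΓ hs]) (hZ s hs).2
    _ ≤ c2 * Γ / s * lam := by gcongr; exact pFail_le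
    _ = lam * c2 * Γ / s := by ring
  calc _ ≤ c2 / s * Γ * (c4 / s * Γ + c3 / M * Γ / 2 + Z s * (1 + c3 * Γ / 2 * log M)) :=
        ibepOutage_le hΓ (by positivity) (div_pos hc2 hs) (by positivity) hc3 (hZ s hs).1 hM1 hs12
    _ ≤ c2 / s * Γ * (c4 / s * Γ + c3 * lam * c2 * Γ ^ 2 / (2 * φ) / s
          + lam * c2 * Γ / s * (1 + c3 * Γ / 2 * (2 * log s))) := by
        have := log_nonneg hM1
        gcongr
    _ = c2 * Γ * (c4 * Γ + c3 * lam * c2 * Γ ^ 2 / (2 * φ) + lam * c2 * Γ * (1 + c3 * Γ * log s))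
          / s ^ 2 := by field_simp
    _ ≤ _ := by
        refine div_le_div_of_nonneg_right ?_ (by positivity)
        rw [mul_assoc (c2 * Γ)]
        refine mul_le_mul_of_nonneg_left ?_ (by positivity)
        have hA : 0 ≤ c3 * lam * c2 * Γ ^ 2 / (2 * φ) := by positivity
        have hB : 0 ≤ lam * c2 * Γ := by positivity
        nlinarith [mul_le_mul_of_nonneg_left hlog hA, mul_le_mul_of_nonneg_left hlog hB,
          mul_le_mul_of_nonneg_left hlog (by positivity : 0 ≤ c4 * Γ)]

end Asymptotics

theorem stmt18_general (c2 c3 c4 lam Γ φ : ℝ) (Z : ℝ → ℝ)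
    (hc2 : 0 < c2) (hc3 : 0 < c3) (hc4 : 0 < c4)
    (hlam : 0 < lam) (hΓ : 0 < Γ) (hφ : 1 < φ)
    (hne : ∀ᶠ s in atTop,
      c3 / Mfn c2 lam Γ φ s ≠ c2 / s ∧ c3 ≠ Mfn c2 lam Γ φ s * (c2 / s))
    (hZ : ∀ s : ℝ, 0 < s → 0 < Z s ∧
      Z s = pFail c2 Γ s * lam * (1 - Real.exp (-(Z s) * Mfn c2 lam Γ φ s))) :
    Tendsto (fun s => Real.log
        (ibepOutage Γ (c3 / Mfn c2 lam Γ φ s) (c2 / s) (c4 / s) (Z s)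
          (Mfn c2 lam Γ φ s) c3) / Real.log s)
      atTop (nhds (-2)) := by
  have hφ0 : 0 < φ := zero_lt_one.trans hφ
  obtain ⟨K, hK, hup⟩ := eventually_ibepOutage_le hc2 hc3.le hc4 hlam hΓ hφ0
    (hne.mono fun _ h => h.1) hZ
  have hlow := eventually_div_sq_le_ibepOutage hc2 hc3.le hc4 hlam hΓ hφ0.le
    (fun s hs => (hZ s hs).1)
  simpa using tendsto_log_div_log_of_le_of_le 2 (by positivity) hK hlow hup

/-- Diversity analysis of the IBEP: with `W₂(s) = c₂/s`, `W₄(s) = c₄/s`,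
`M(s) = φ/(λ₁ p(s))`, `W₁(s) = c₃/M(s)` and `Z(s)` the unique positive root of
`z = p(s) λ₁ (1 - exp(-z M(s)))`, the outage probability `P(s)` satisfies
`log P(s)/log s → -2`, i.e. diversity order two. -/
theorem stmt18 (c2 c3 c4 lam Γ φ : ℝ) (Z : ℝ → ℝ)
    (hc2 : 0 < c2) (hc3 : 0 < c3) (hc4 : 0 < c4)
    (hlam : 0 < lam) (hΓ : 0 < Γ) (hφ : 1 < φ)
    (hne : ∀ᶠ s in atTop,
      c3 / Mfn c2 lam Γ φ s ≠ c2 / s ∧ c3 ≠ Mfn c2 lam Γ φ s * (c2 / s))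
    (hZ : ∀ s : ℝ, 0 < s → 0 < Z s ∧
      Z s = pFail c2 Γ s * lam * (1 - Real.exp (-(Z s) * Mfn c2 lam Γ φ s)))
    (hZuniq : ∀ s : ℝ, 0 < s → ∀ z : ℝ, 0 < z →
      z = pFail c2 Γ s * lam * (1 - Real.exp (-z * Mfn c2 lam Γ φ s)) → z = Z s) :
    Tendsto (fun s => Real.log
        (ibepOutage Γ (c3 / Mfn c2 lam Γ φ s) (c2 / s) (c4 / s) (Z s)
          (Mfn c2 lam Γ φ s) c3) / Real.log s)
      atTop (nhds (-2)) :=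
  stmt18_general c2 c3 c4 lam Γ φ Z hc2 hc3 hc4 hlam hΓ hφ hne hZ
end
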